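/- arXiv:1710.07144 — 6 statements merged into one kernel-verified Lean document; each statement's English description precedes it below -/
import Mathlib

section
/- If a bounded set E ⊆ ℝ contains arbitrarily long arithmetic progressions (for every k ≥ 3 there exist t ∈ ℝ and δ > 0 with {t, t+δ, ..., t+(k-1)δ} ⊆ E), then the Assouad dimension of E is at least 1. -/
open Filter MeasureTheory

/-- Least number of closed balls of radius `r` needed to cover `A`. -/
noncomputable def covNum (r : ℝ) (A : Set ℝ) : ℕ :=
  sInf {n : ℕ | ∃ F : Finset ℝ, F.card = n ∧ A ⊆ ⋃ x ∈ F, Metric.closedBall x r}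

/-- Assouad dimension of a subset of ℝ. -/
noncomputable def assouadDim (E : Set ℝ) : ℝ :=
  sInf {α : ℝ | 0 ≤ α ∧ ∃ b C : ℝ, 0 < b ∧ 0 < C ∧
    ∀ r R : ℝ, 0 < r → r < R → R < b → ∀ x ∈ E,
      (covNum r (Metric.ball x R ∩ E) : ℝ) ≤ C * (R / r) ^ α}

lemma covNum_spec (A : Set ℝ) (c ρ r : ℝ) (hr : 0 < r) (hρ : 0 ≤ ρ)
    (hA : A ⊆ Metric.closedBall c ρ) :
    (∃ F : Finset ℝ, F.card = covNum r A ∧ A ⊆ ⋃ x ∈ F, Metric.closedBall x r) ∧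
      (covNum r A : ℝ) ≤ ρ / r + 1 := by
  classical
  set N := ⌊ρ / r⌋₊ + 1 with hN
  set F₀ : Finset ℝ := (Finset.range N).image (fun i : ℕ => c - ρ + r + 2 * r * (i:ℝ)) with hF₀
  have hcov : A ⊆ ⋃ x ∈ F₀, Metric.closedBall x r := by
    intro a ha
    have h1 : |a - c| ≤ ρ := by
      have := hA ha; rwa [Metric.mem_closedBall, Real.dist_eq] at this
    obtain ⟨hl, hu⟩ := abs_le.mp h1
    set s := a - (c - ρ) with hs
    have hs0 : 0 ≤ s := by simp only [hs]; linarith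
    have hs2 : s ≤ 2 * ρ := by simp only [hs]; linarith
    set i := ⌊s / (2 * r)⌋₊ with hi
    have h2r : (0:ℝ) < 2 * r := by linarith
    have hile : (i : ℝ) ≤ s / (2 * r) := Nat.floor_le (by positivity)
    have hilt : s / (2 * r) < i + 1 := Nat.lt_floor_add_one _
    have hiN : i < N := by
      have h3 : (i:ℝ) ≤ ρ / r := by
        refine hile.trans ?_
        rw [div_le_div_iff₀ h2r hr]
        nlinarith
      have : i ≤ ⌊ρ / r⌋₊ := Nat.le_floor h3
      omega
    refine Set.mem_iUnion₂.mpr ⟨c - ρ + r + 2 * r * (i:ℝ), ?_, ?_⟩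
    · exact Finset.mem_image.mpr ⟨i, Finset.mem_range.mpr hiN, rfl⟩
    · rw [Metric.mem_closedBall, Real.dist_eq]
      have l1 : 2 * r * i ≤ s := by
        rw [le_div_iff₀ h2r] at hile; nlinarith [hile]
      have l2 : s < 2 * r * (i + 1) := by
        rw [div_lt_iff₀ h2r] at hilt; nlinarith [hilt]
      rw [abs_le]
      constructor <;> [nlinarith; nlinarith]
  have hne : {n : ℕ | ∃ F : Finset ℝ, F.card = n ∧
      A ⊆ ⋃ x ∈ F, Metric.closedBall x r}.Nonempty := ⟨F₀.card, F₀, rfl, hcov⟩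
  have hmem := Nat.sInf_mem hne
  obtain ⟨F, hFcard, hFcov⟩ := hmem
  refine ⟨⟨F, hFcard, hFcov⟩, ?_⟩
  have hle : covNum r A ≤ N := by
    have h1 : covNum r A ≤ F₀.card := Nat.sInf_le ⟨F₀, rfl, hcov⟩
    refine h1.trans (Finset.card_image_le.trans (by simp))
  have hfl : (⌊ρ / r⌋₊ : ℝ) ≤ ρ / r := Nat.floor_le (by positivity)
  calc (covNum r A : ℝ) ≤ (N : ℝ) := by exact_mod_cast hle
    _ ≤ ρ / r + 1 := by rw [hN]; push_cast; linarith

lemma count_le (t δ : ℝ) (hδ : 0 < δ) (m : ℕ) (A : Set ℝ)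
    (hsub : ∀ j : ℕ, j < m → t + j * δ ∈ A) (F : Finset ℝ)
    (hcov : A ⊆ ⋃ x ∈ F, Metric.closedBall x δ) : m ≤ 3 * F.card := by
  classical
  set f : ℕ → ℝ := fun j =>
    if h : ∃ x ∈ F, t + j * δ ∈ Metric.closedBall x δ then h.choose else 0 with hf
  have hfm : ∀ j ∈ Finset.range m, f j ∈ F ∧ t + j * δ ∈ Metric.closedBall (f j) δ := by
    intro j hj
    have hj' := Finset.mem_range.mp hj
    have hmemA : t + j * δ ∈ A := hsub j hj'
    have hex : ∃ x ∈ F, t + j * δ ∈ Metric.closedBall x δ := by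
      have := hcov hmemA
      simpa using this
    simp only [hf, dif_pos hex]
    exact hex.choose_spec
  have hfib : ∀ a ∈ Finset.image f (Finset.range m),
      (Finset.filter (fun j => f j = a) (Finset.range m)).card ≤ 3 := by
    intro a _
    rcases (Finset.filter (fun j => f j = a) (Finset.range m)).eq_empty_or_nonempty with he | hne
    · rw [he]; simp
    · have hsub' : Finset.filter (fun j => f j = a) (Finset.range m) ⊆
          Finset.Icc ((Finset.filter (fun j => f j = a) (Finset.range m)).min' hne)
            ((Finset.filter (fun j => f j = a) (Finset.range m)).min' hne + 2) := by
        set j₀ := (Finset.filter (fun j => f j = a) (Finset.range m)).min' hne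
        intro j hj
        have hj0le : j₀ ≤ j := Finset.min'_le _ j hj
        have hj0mem : j₀ ∈ Finset.filter (fun j => f j = a) (Finset.range m) :=
          Finset.min'_mem _ hne
        rw [Finset.mem_filter] at hj0mem hj
        obtain ⟨hj0r, hj0f⟩ := hj0mem
        obtain ⟨hjr, hjf⟩ := hj
        have d1 := (hfm j hjr).2
        have d2 := (hfm j₀ hj0r).2
        rw [Metric.mem_closedBall, Real.dist_eq] at d1 d2
        rw [hjf] at d1
        rw [hj0f] at d2
        obtain ⟨d1a, d1b⟩ := abs_le.mp d1
        obtain ⟨d2a, d2b⟩ := abs_le.mp d2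
        have hcast : (j:ℝ) ≤ (j₀:ℝ) + 2 := by nlinarith
        have : j ≤ j₀ + 2 := by exact_mod_cast hcast
        exact Finset.mem_Icc.mpr ⟨hj0le, this⟩
      refine (Finset.card_le_card hsub').trans ?_
      rw [Nat.card_Icc]
      omega
  have key := Finset.card_le_mul_card_image (f := f) (Finset.range m) 3 hfib
  have himg : Finset.image f (Finset.range m) ⊆ F := by
    intro x hx
    obtain ⟨j, hj, rfl⟩ := Finset.mem_image.mp hx
    exact (hfm j hj).1
  calc m = (Finset.range m).card := (Finset.card_range m).symm
    _ ≤ 3 * (Finset.image f (Finset.range m)).card := key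
    _ ≤ 3 * F.card := Nat.mul_le_mul_left 3 (Finset.card_le_card himg)

theorem stmt0 (E : Set ℝ) (hE : Bornology.IsBounded E)
    (hAP : ∀ k : ℕ, 3 ≤ k → ∃ t δ : ℝ, 0 < δ ∧ ∀ j : ℕ, j < k → t + j * δ ∈ E) :
    1 ≤ assouadDim E := by
  obtain ⟨ρ₀, hEρ₀⟩ := (Metric.isBounded_iff_subset_closedBall (0:ℝ)).mp hE
  set ρ : ℝ := max ρ₀ 1 with hρdef
  have hρ1 : (1:ℝ) ≤ ρ := le_max_right _ _
  have hρ0 : (0:ℝ) < ρ := by linarith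
  have hEρ : E ⊆ Metric.closedBall 0 ρ :=
    hEρ₀.trans (Metric.closedBall_subset_closedBall (le_max_left _ _))
  -- the defining set is nonempty: α = 1 works
  have hone : (1:ℝ) ∈ {α : ℝ | 0 ≤ α ∧ ∃ b C : ℝ, 0 < b ∧ 0 < C ∧
      ∀ r R : ℝ, 0 < r → r < R → R < b → ∀ x ∈ E,
        (covNum r (Metric.ball x R ∩ E) : ℝ) ≤ C * (R / r) ^ α} := by
    refine ⟨zero_le_one, 1, 2, one_pos, two_pos, ?_⟩
    intro r R hr hrR hR1 x hx
    have hR0 : 0 ≤ R := by linarith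
    have hsubset : Metric.ball x R ∩ E ⊆ Metric.closedBall x R :=
      (Set.inter_subset_left).trans Metric.ball_subset_closedBall
    have hcn := (covNum_spec (Metric.ball x R ∩ E) x R r hr hR0 hsubset).2
    have hdiv : (1:ℝ) < R / r := (one_lt_div hr).mpr hrR
    rw [Real.rpow_one]
    linarith
  refine le_csInf ⟨1, hone⟩ ?_
  rintro α ⟨hα0, b, C, hb, hC, hbound⟩
  by_contra hlt
  push_neg at hlt
  have h1α : 0 < 1 - α := by linarith
  set K : ℝ := max ((3 * C) ^ (1 / (1 - α))) 1 with hK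
  have hK1 : (1:ℝ) ≤ K := le_max_right _ _
  set k : ℕ := 3 + ⌈K + (4 * ρ / b) * (K + 1)⌉₊ with hk
  have hk3 : 3 ≤ k := by omega
  have hkR : (3:ℝ) + (K + (4 * ρ / b) * (K + 1)) ≤ (k:ℝ) := by
    rw [hk]; push_cast
    have := Nat.le_ceil (K + (4 * ρ / b) * (K + 1))
    linarith
  have hbρ : 0 < 4 * ρ / b := by positivity
  obtain ⟨t, δ, hδ, hmem⟩ := hAP k hk3
  -- δ is small: (k-1) * δ ≤ 2ρ
  have htE : t ∈ E := by
    have := hmem 0 (by omega)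
    simpa using this
  have hδle : ((k:ℝ) - 1) * δ ≤ 2 * ρ := by
    have h1 := hmem (k - 1) (by omega)
    have h2 := hEρ h1
    have h3 := hEρ htE
    rw [Metric.mem_closedBall, Real.dist_eq] at h2 h3
    have hcast : ((k - 1 : ℕ) : ℝ) = (k:ℝ) - 1 := by
      have : 1 ≤ k := by omega
      push_cast [this]; ring
    rw [hcast] at h2
    obtain ⟨h2a, h2b⟩ := abs_le.mp (by simpa using h2)
    obtain ⟨h3a, h3b⟩ := abs_le.mp (by simpa using h3)
    linarith
  have hKK1 : (0:ℝ) < K + 1 := by linarith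
  have hprod : 4 * ρ / b ≤ (4 * ρ / b) * (K + 1) :=
    le_mul_of_one_le_right hbρ.le (by linarith)
  have hkb : 4 * ρ / b < (k:ℝ) - 1 := by linarith
  have hk1pos : (0:ℝ) < (k:ℝ) - 1 := by
    have : (3:ℝ) ≤ (k:ℝ) := by exact_mod_cast hk3
    linarith
  have h4 : 4 * ρ < ((k:ℝ) - 1) * b := by rwa [div_lt_iff₀ hb] at hkb
  have hδb : δ < b / 2 := by
    have u1 : 2 * δ * ((k:ℝ) - 1) < b * ((k:ℝ) - 1) := by linarith
    have u2 : 2 * δ < b := (mul_lt_mul_iff_of_pos_right hk1pos).mp u1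
    linarith
  set R : ℝ := min ((k:ℝ) * δ) (b / 2) with hR
  have hkδ : δ < (k:ℝ) * δ := by
    have u := (mul_lt_mul_iff_of_pos_right hδ).mpr (show (1:ℝ) < (k:ℝ) by linarith)
    linarith
  have hrR : δ < R := lt_min hkδ hδb
  have hRb : R < b := (min_le_right _ _).trans_lt (by linarith)
  have hR0 : 0 < R := hδ.trans hrR
  set Q : ℝ := R / δ with hQ
  have hQ1 : 1 < Q := (one_lt_div hδ).mpr hrR
  have hQk : Q ≤ (k:ℝ) := by
    rw [hQ, div_le_iff₀ hδ]
    exact min_le_left _ _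
  -- Q > K
  have hQK : K < Q := by
    rcases min_cases ((k:ℝ) * δ) (b / 2) with ⟨heq, hle⟩ | ⟨heq, hlt⟩
    · have hQeq : Q = (k:ℝ) := by
        rw [hQ, hR, heq, mul_div_assoc, div_self hδ.ne', mul_one]
      rw [hQeq]
      have := mul_nonneg hbρ.le hKK1.le
      linarith
    · have hQeq : Q = b / (2 * δ) := by
        rw [hQ, hR, heq, div_div]
      rw [hQeq]
      rw [lt_div_iff₀ (by positivity : (0:ℝ) < 2 * δ)]
      have hk1 : (4 * ρ / b) * (K + 1) < (k:ℝ) - 1 := by linarith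
      have h2 : (4 * ρ) * (K + 1) < b * ((k:ℝ) - 1) := by
        rw [div_mul_eq_mul_div, div_lt_iff₀ hb] at hk1
        linarith [hk1]
      have t1 : 2 * K * (((k:ℝ) - 1) * δ) ≤ 2 * K * (2 * ρ) :=
        mul_le_mul_of_nonneg_left hδle (by linarith)
      have hstep : K * (2 * δ) * ((k:ℝ) - 1) < b * ((k:ℝ) - 1) := by nlinarith [t1, h2]
      exact (mul_lt_mul_iff_of_pos_right hk1pos).mp hstep
  -- apply the covering bound
  have hbd := hbound δ R hδ hrR hRb t htE
  rw [← hQ] at hbd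
  set A : Set ℝ := Metric.ball t R ∩ E with hA
  have hAsub : A ⊆ Metric.closedBall t R :=
    (Set.inter_subset_left).trans Metric.ball_subset_closedBall
  obtain ⟨⟨F, hFcard, hFcov⟩, _⟩ := covNum_spec A t R δ hδ hR0.le hAsub
  set m : ℕ := ⌈Q⌉₊ with hm
  have hpts : ∀ j : ℕ, j < m → t + j * δ ∈ A := by
    intro j hj
    have hjQ : (j:ℝ) < Q := Nat.lt_ceil.mp hj
    have hjk : j < k := by
      have : (j:ℝ) < (k:ℝ) := lt_of_lt_of_le hjQ hQk
      exact_mod_cast this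
    refine ⟨?_, hmem j hjk⟩
    rw [Metric.mem_ball, Real.dist_eq]
    have hjR : (j:ℝ) * δ < R := by
      rw [hQ] at hjQ; exact (lt_div_iff₀ hδ).mp hjQ
    have heq : t + (j:ℝ) * δ - t = (j:ℝ) * δ := by ring
    rw [heq, abs_of_nonneg (by positivity)]
    exact hjR
  have hcount : m ≤ 3 * F.card := count_le t δ hδ m A hpts F hFcov
  rw [hFcard] at hcount
  have hQm : Q ≤ (m:ℝ) := Nat.le_ceil Q
  have hm3 : (m:ℝ) ≤ 3 * (covNum δ A : ℝ) := by exact_mod_cast hcount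
  have hQpos : 0 < Q := by linarith
  have hQαpos : 0 < Q ^ α := Real.rpow_pos_of_pos hQpos α
  have hQle : Q ≤ (3 * C) * Q ^ α := by linarith [hbd, hm3, hQm]
  have h5 : Q ^ (1 - α) ≤ 3 * C := by
    rw [Real.rpow_sub hQpos, Real.rpow_one, div_le_iff₀ hQαpos]
    exact hQle
  have h6 : Q ≤ (3 * C) ^ (1 / (1 - α)) := by
    have h7 := Real.rpow_le_rpow (le_of_lt (Real.rpow_pos_of_pos hQpos (1 - α))) h5
      (by positivity : (0:ℝ) ≤ 1 / (1 - α))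
    rwa [← Real.rpow_mul hQpos.le, mul_one_div_cancel h1α.ne', Real.rpow_one] at h7
  have : Q ≤ K := h6.trans (le_max_left _ _)
  linarith
end

section
/- Let b ≥ 2, D ⊊ {0,...,b-1} nonempty, S ⊆ ℕ infinite, and let E_{S,D} = { Σ_{n≥1} x_n b^{-n} : x_n ∈ D if n ∉ S, x_n ∈ {0,...,b-1} if n ∈ S }. If S contains N consecutive integers ℓ+1, ℓ+2, ..., ℓ+N (with ℓ ≥ 1), then E_{S,D} contains an arithmetic progression of length b^N with gap b^{-(ℓ+N)}. -/
/-- The set defined by digit restrictions in base `b`: digits at positions `n ∉ S`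
are restricted to `D`, digits at positions `n ∈ S` are unrestricted. -/
def ESD (b : ℕ) (D : Set ℕ) (S : Set ℕ) : Set ℝ :=
  {x : ℝ | ∃ f : ℕ → ℕ, (∀ n : ℕ, 1 ≤ n → f n < b) ∧
    (∀ n : ℕ, 1 ≤ n → n ∉ S → f n ∈ D) ∧
    x = ∑' n : ℕ, (f (n + 1) : ℝ) / (b : ℝ) ^ (n + 1)}

lemma digitsum (b N j : ℕ) :
    ∑ i ∈ Finset.range N, (j / b ^ i % b) * b ^ i = j % b ^ N := by
  induction N with
  | zero => simp [Nat.mod_one]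
  | succ N ih =>
    rw [Finset.sum_range_succ, ih, pow_succ, Nat.mod_mul]
    ring

lemma summable_digits (b : ℕ) (hb : 2 ≤ b) (f : ℕ → ℕ) (hf : ∀ n, 1 ≤ n → f n < b) :
    Summable (fun n : ℕ => (f (n + 1) : ℝ) / (b : ℝ) ^ (n + 1)) := by
  have hb0 : (0:ℝ) < b := by positivity
  have hgeo : Summable (fun n : ℕ => (b:ℝ) * ((b:ℝ)⁻¹) ^ (n + 1)) := by
    apply Summable.mul_left
    apply Summable.comp_injective _ (add_left_injective 1)
    exact summable_geometric_of_lt_one (by positivity)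
      (by rw [inv_lt_one_iff₀]; right; exact_mod_cast lt_of_lt_of_le one_lt_two hb)
  refine Summable.of_nonneg_of_le (fun n => by positivity) (fun n => ?_) hgeo
  rw [div_eq_mul_inv, ← inv_pow]
  apply mul_le_mul_of_nonneg_right _ (by positivity)
  exact_mod_cast (hf (n+1) (Nat.le_add_left 1 n)).le

theorem stmt5 (b : ℕ) (hb : 2 ≤ b) (D : Set ℕ) (hD : D.Nonempty)
    (hDb : D ⊆ Set.Iio b) (hDp : D ≠ Set.Iio b)
    (S : Set ℕ) (hS : S.Infinite) (ℓ N : ℕ) (hℓ : 1 ≤ ℓ)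
    (hrun : ∀ j : ℕ, 1 ≤ j → j ≤ N → ℓ + j ∈ S) :
    ∃ t : ℝ, ∀ j : ℕ, j < b ^ N →
      t + j * ((b : ℝ) ^ (ℓ + N))⁻¹ ∈ ESD b D S := by
  obtain ⟨d, hd⟩ := hD
  have hdb : d < b := hDb hd
  have hb0 : (0:ℝ) < b := by positivity
  -- base digit function
  set g : ℕ → ℕ := fun n => if ℓ + 1 ≤ n ∧ n ≤ ℓ + N then 0 else d with hg
  refine ⟨∑' n : ℕ, (g (n + 1) : ℝ) / (b : ℝ) ^ (n + 1), fun j hj => ?_⟩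
  set f : ℕ → ℕ := fun n => if ℓ + 1 ≤ n ∧ n ≤ ℓ + N then j / b ^ (ℓ + N - n) % b else d
    with hf
  have hfb : ∀ n, 1 ≤ n → f n < b := by
    intro n _
    simp only [hf]
    split
    · exact Nat.mod_lt _ (by omega)
    · exact hdb
  have hgb : ∀ n, 1 ≤ n → g n < b := by
    intro n _
    simp only [hg]
    split
    · omega
    · exact hdb
  refine ⟨f, hfb, fun n hn hnS => ?_, ?_⟩
  · simp only [hf]
    rw [if_neg]
    · exact hd
    · rintro ⟨h1, h2⟩
      exact hnS (by have := hrun (n - ℓ) (by omega) (by omega); rwa [show ℓ + (n - ℓ) = n by omega] at this)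
  · -- the arithmetic identity
    have hsumg := summable_digits b hb g hgb
    have hsumf := summable_digits b hb f hfb
    -- h : the correction term
    set h : ℕ → ℝ := fun n =>
      if ℓ + 1 ≤ n + 1 ∧ n + 1 ≤ ℓ + N then
        ((j / b ^ (ℓ + N - (n + 1)) % b : ℕ) : ℝ) / (b : ℝ) ^ (n + 1) else 0 with hh
    have hpt : ∀ n : ℕ, (f (n + 1) : ℝ) / (b : ℝ) ^ (n + 1)
        = (g (n + 1) : ℝ) / (b : ℝ) ^ (n + 1) + h n := by
      intro n
      simp only [hf, hg, hh]
      split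
      · simp
      · simp
    have hsumh : Summable h := by
      apply summable_of_finite_support
      apply Set.Finite.subset (Set.finite_Icc ℓ (ℓ + N))
      intro n hn
      simp only [Function.mem_support, hh] at hn
      by_contra hc
      simp only [Set.mem_Icc] at hc
      apply hn
      rw [if_neg (by omega)]
    have key : ∑' n : ℕ, h n = j * ((b : ℝ) ^ (ℓ + N))⁻¹ := by
      rw [tsum_eq_sum (s := Finset.Ico ℓ (ℓ + N)) (by
        intro n hn
        simp only [Finset.mem_Ico] at hn
        simp only [hh]
        rw [if_neg (by omega)])]
      rw [Finset.sum_Ico_eq_sum_range]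
      simp only [hh, Nat.add_sub_cancel_left]
      have : ∀ i ∈ Finset.range N,
          (if ℓ + 1 ≤ ℓ + i + 1 ∧ ℓ + i + 1 ≤ ℓ + N then
            ((j / b ^ (ℓ + N - (ℓ + i + 1)) % b : ℕ) : ℝ) / (b : ℝ) ^ (ℓ + i + 1) else 0)
          = ((j / b ^ (N - 1 - i) % b * b ^ (N - 1 - i) : ℕ) : ℝ) * ((b : ℝ) ^ (ℓ + N))⁻¹ := by
        intro i hi
        simp only [Finset.mem_range] at hi
        rw [if_pos (by omega)]
        have h1 : ℓ + N - (ℓ + i + 1) = N - 1 - i := by omega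
        rw [h1, Nat.cast_mul, Nat.cast_pow, div_eq_mul_inv, mul_assoc]
        congr 1
        field_simp
        rw [← pow_add]
        congr 1
        omega
      rw [Finset.sum_congr rfl this, ← Finset.sum_mul, ← Nat.cast_sum,
        show (∑ x ∈ Finset.range N, j / b ^ (N - 1 - x) % b * b ^ (N - 1 - x)) = j from by
          rw [Finset.sum_range_reflect (fun i => j / b ^ i % b * b ^ i) N, digitsum,
            Nat.mod_eq_of_lt hj]]
    calc (∑' n : ℕ, (g (n + 1) : ℝ) / (b : ℝ) ^ (n + 1)) + j * ((b : ℝ) ^ (ℓ + N))⁻¹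
        = (∑' n : ℕ, (g (n + 1) : ℝ) / (b : ℝ) ^ (n + 1)) + ∑' n : ℕ, h n := by rw [key]
      _ = ∑' n : ℕ, ((g (n + 1) : ℝ) / (b : ℝ) ^ (n + 1) + h n) := (Summable.tsum_add hsumg hsumh).symm
      _ = ∑' n : ℕ, (f (n + 1) : ℝ) / (b : ℝ) ^ (n + 1) := by
          exact tsum_congr fun n => (hpt n).symm
end

section
/- Let b ≥ 2, D ⊊ {0,...,b-1} nonempty, and S ⊆ ℕ infinite. The set E_{S,D} contains arbitrarily long arithmetic progressions if and only if its Assouad dimension equals 1. -/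
open Finset Metric

def dimSet (E : Set ℝ) : Set ℝ :=
  {α : ℝ | 0 ≤ α ∧ ∃ b C : ℝ, 0 < b ∧ 0 < C ∧
    ∀ r R : ℝ, 0 < r → r < R → R < b → ∀ x ∈ E,
      (covNum r (Metric.ball x R ∩ E) : ℝ) ≤ C * (R / r) ^ α}

lemma assouadDim_eq (E : Set ℝ) : assouadDim E = sInf (dimSet E) := rfl

variable {b : ℕ}

lemma hb1R (hb : 2 ≤ b) : (1:ℝ) < (b:ℝ) := by exact_mod_cast hb.trans_lt' one_lt_two

lemma tail_facts (hb : 2 ≤ b) (c : ℕ → ℕ) (hc : ∀ n, c n < b) (v : ℕ) :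
    Summable (fun n : ℕ => (c n : ℝ) / (b:ℝ) ^ (n+v+1)) ∧
    0 ≤ (∑' n : ℕ, (c n : ℝ) / (b:ℝ) ^ (n+v+1)) ∧
    (∑' n : ℕ, (c n : ℝ) / (b:ℝ) ^ (n+v+1)) ≤ 1 / (b:ℝ) ^ v := by
  have hb0 : (0:ℝ) < b := lt_trans one_pos (hb1R hb)
  set q : ℝ := 1 / b with hq
  have hq0 : 0 ≤ q := by positivity
  have hq1 : q < 1 := by
    rw [hq, div_lt_one hb0]; exact hb1R hb
  have hgs : Summable (fun n : ℕ => ((b:ℝ)-1) * q ^ (v+1) * q ^ n) :=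
    (summable_geometric_of_lt_one hq0 hq1).mul_left _
  have hbm1 : (0:ℝ) < (b:ℝ) - 1 := by linarith [hb1R hb]
  have h3 : ∀ n : ℕ, ((b:ℝ)-1) * q ^ (v+1) * q ^ n = ((b:ℝ)-1) / (b:ℝ)^(n+v+1) := by
    intro n
    rw [hq, div_pow, div_pow, one_pow, one_pow,
      show (b:ℝ)^(n+v+1) = (b:ℝ)^(v+1) * (b:ℝ)^n by rw [← pow_add]; congr 1; omega]
    field_simp
  have hle : ∀ n : ℕ, (c n : ℝ) / (b:ℝ) ^ (n+v+1) ≤ ((b:ℝ)-1) * q ^ (v+1) * q ^ n := by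
    intro n
    rw [h3 n]
    have h1 : (c n : ℝ) ≤ (b:ℝ) - 1 := by
      have : (c n : ℕ) ≤ b - 1 := Nat.le_sub_one_of_lt (hc n)
      have h2 : ((c n : ℕ) : ℝ) ≤ ((b-1 : ℕ) : ℝ) := by exact_mod_cast this
      rwa [Nat.cast_sub (by omega), Nat.cast_one] at h2
    exact div_le_div_of_nonneg_right h1 (by positivity) |>.trans_eq rfl
  have hsum : Summable (fun n : ℕ => (c n : ℝ) / (b:ℝ) ^ (n+v+1)) :=
    Summable.of_nonneg_of_le (fun n => by positivity) hle hgs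
  refine ⟨hsum, tsum_nonneg (fun n => by positivity), ?_⟩
  refine (Summable.tsum_le_tsum hle hsum hgs).trans ?_
  rw [tsum_mul_left, tsum_geometric_of_lt_one hq0 hq1]
  have h1q : 1 - q = ((b:ℝ)-1)/b := by rw [hq]; field_simp
  rw [h1q, hq, div_pow, one_pow]
  refine le_of_eq ?_
  rw [pow_succ]
  field_simp

lemma esd_split (hb : 2 ≤ b) (f : ℕ → ℕ) (hf : ∀ n, 1 ≤ n → f n < b) (v : ℕ) :
    ∃ T : ℝ, (∑' n : ℕ, (f (n+1) : ℝ) / (b:ℝ) ^ (n+1))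
      = (∑ n ∈ Finset.range v, (f (n+1) : ℝ) / (b:ℝ) ^ (n+1)) + T
      ∧ 0 ≤ T ∧ T ≤ 1 / (b:ℝ) ^ v := by
  have hsum := (tail_facts hb (fun n => f (n+1)) (fun n => hf _ (by omega)) 0).1
  have hsum' : Summable (fun n : ℕ => (f (n+1) : ℝ) / (b:ℝ) ^ (n+1)) := hsum
  have hsplit := Summable.sum_add_tsum_nat_add v hsum'
  have htail := tail_facts hb (fun n => f (n+v+1)) (fun n => hf _ (by omega)) v
  refine ⟨∑' n : ℕ, (f (n+v+1) : ℝ) / (b:ℝ) ^ (n+v+1), ?_, htail.2.1, htail.2.2⟩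
  rw [← hsplit]

lemma covNum_le_card {A : Set ℝ} {r : ℝ} {F : Finset ℝ}
    (h : A ⊆ ⋃ x ∈ F, closedBall x r) : covNum r A ≤ F.card :=
  Nat.sInf_le ⟨F, rfl, h⟩

lemma grid_cover (x R r : ℝ) (hr : 0 < r) (hR : 0 < R) :
    ∃ F : Finset ℝ, (F.card : ℝ) ≤ R / r + 1 ∧
      Set.Icc (x - R) (x + R) ⊆ ⋃ y ∈ F, closedBall y r := by
  refine ⟨(Finset.range (⌊R / r⌋₊ + 1)).image (fun i : ℕ => x - R + r + 2*r*i), ?_, ?_⟩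
  · have hcard : ((Finset.range (⌊R / r⌋₊ + 1)).image (fun i : ℕ => x - R + r + 2*r*i)).card
        ≤ ⌊R / r⌋₊ + 1 := Finset.card_image_le.trans_eq (Finset.card_range _)
    have h2 : ((⌊R / r⌋₊ + 1 : ℕ) : ℝ) ≤ R / r + 1 := by
      push_cast
      have := Nat.floor_le (le_of_lt (div_pos hR hr))
      linarith
    exact le_trans (by exact_mod_cast hcard) h2
  · intro y hy
    obtain ⟨hy1, hy2⟩ := hy
    set s : ℝ := y - (x - R) with hs
    have hs0 : 0 ≤ s := by simp [hs]; linarith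
    have hs2 : s ≤ 2 * R := by simp [hs]; linarith
    set i : ℕ := ⌊s / (2*r)⌋₊ with hi
    have hiN : i ∈ Finset.range (⌊R / r⌋₊ + 1) := by
      rw [Finset.mem_range, Nat.lt_add_one_iff]
      apply Nat.floor_mono
      rw [div_le_div_iff₀ (by linarith) hr]
      nlinarith
    rw [Set.mem_iUnion₂]
    refine ⟨x - R + r + 2*r*i, Finset.mem_image_of_mem _ hiN, ?_⟩
    rw [mem_closedBall, Real.dist_eq, abs_le]
    have h1 : (i:ℝ) ≤ s / (2*r) := Nat.floor_le (by positivity)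
    have h2 : s / (2*r) < i + 1 := Nat.lt_floor_add_one _
    have h1' : 2*r*i ≤ s := by
      rw [le_div_iff₀ (by linarith)] at h1
      linarith
    have h2' : s < 2*r*(i+1) := by
      rw [div_lt_iff₀ (by linarith)] at h2
      linarith
    constructor <;> [skip; skip] <;> simp [hs] at h1' h2' ⊢ <;> nlinarith
lemma le_covNum (x R : ℝ) {A : Set ℝ} {r : ℝ} (hr : 0 < r) (hR : 0 < R)
    (hsub : A ⊆ Set.Icc (x - R) (x + R)) {m : ℕ} (p : Fin m → ℝ)
    (hp : ∀ i, p i ∈ A) (hsep : ∀ i j, i ≠ j → 2*r < |p i - p j|) :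
    m ≤ covNum r A := by
  have hne : {n : ℕ | ∃ F : Finset ℝ, F.card = n ∧ A ⊆ ⋃ x ∈ F, closedBall x r}.Nonempty := by
    obtain ⟨F, _, hFcov⟩ := grid_cover x R r hr hR
    exact ⟨F.card, F, rfl, fun y hy => hFcov (hsub hy)⟩
  obtain ⟨F, hFcard, hFcov⟩ := Nat.sInf_mem hne
  have hchoice : ∀ i : Fin m, ∃ y ∈ F, p i ∈ closedBall y r := by
    intro i
    have := hFcov (hp i)
    rw [Set.mem_iUnion₂] at this
    simpa using this
  choose g hgF hgB using hchoice
  have hinj : Function.Injective g := by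
    intro i j hij
    by_contra hne'
    have h1 := hgB i
    have h2 := hgB j
    rw [mem_closedBall, Real.dist_eq] at h1 h2
    have := hsep i j hne'
    rw [hij] at h1
    have : |p i - p j| ≤ 2 * r := by
      have := abs_sub_abs_le_abs_sub (p i) (p j)
      calc |p i - p j| = |(p i - g j) - (p j - g j)| := by ring_nf
        _ ≤ |p i - g j| + |p j - g j| := abs_sub _ _
        _ ≤ 2 * r := by linarith
    linarith [hsep i j hne']
  calc m = (Finset.univ : Finset (Fin m)).card := by simp
    _ ≤ F.card := Finset.card_le_card_of_injOn g (fun i _ => hgF i) (hinj.injOn)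
    _ = covNum r A := hFcard

lemma digit_sum (hb : 1 ≤ b) : ∀ m i, i < b^m →
    ∑ e ∈ Finset.range m, (i / b^e % b) * b^e = i := by
  intro m
  induction m with
  | zero => intro i hi; rw [pow_zero] at hi; interval_cases i; simp
  | succ m ih =>
    intro i hi
    rw [Finset.sum_range_succ']
    have h1 : ∀ e, i / b^(e+1) % b * b^(e+1) = ((i/b) / b^e % b * b^e) * b := by
      intro e
      rw [pow_succ', Nat.div_div_eq_div_mul]
      ring
    simp only [h1, pow_zero, Nat.pow_zero, Nat.div_one, mul_one]
    rw [← Finset.sum_mul]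
    have hdiv : i / b < b ^ m := by
      rw [Nat.div_lt_iff_lt_mul (by omega)]
      calc i < b^(m+1) := hi
        _ = b^m * b := pow_succ b m
    rw [ih (i/b) hdiv]
    rw [Nat.mul_comm (i/b) b]
    exact Nat.div_add_mod i b

lemma run_to_AP {D S : Set ℕ} (hb : 2 ≤ b) {d0 : ℕ} (hd0D : d0 ∈ D) (hd0 : d0 < b)
    (j m : ℕ) (hrun : ∀ n, j+1 ≤ n → n ≤ j+m → n ∈ S) :
    ∃ t : ℝ, ∀ i : ℕ, i < b^m → t + (i : ℝ) / (b:ℝ)^(j+m) ∈ ESD b D S := by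
  have hb0 : (0:ℝ) < b := by exact_mod_cast (by omega : 0 < b)
  classical
  set f : ℕ → ℕ → ℕ := fun i n => if j+1 ≤ n ∧ n ≤ j+m then i / b^(j+m-n) % b else d0 with hf
  have hflt : ∀ i n, 1 ≤ n → f i n < b := by
    intro i n _
    by_cases h : j+1 ≤ n ∧ n ≤ j+m
    · simp only [hf, if_pos h]; exact Nat.mod_lt _ (by omega)
    · simp only [hf, if_neg h]; exact hd0
  have hfD : ∀ i n, 1 ≤ n → n ∉ S → f i n ∈ D := by
    intro i n _ hns
    by_cases h : j+1 ≤ n ∧ n ≤ j+m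
    · exact absurd (hrun n h.1 h.2) hns
    · simp only [hf, if_neg h]; exact hd0D
  have hsummi : ∀ i, Summable (fun n : ℕ => (f i (n+1) : ℝ)/(b:ℝ)^(n+1)) := fun i =>
    (tail_facts hb (fun n => f i (n+1)) (fun n => hflt i _ (by omega)) 0).1
  set t : ℝ := ∑' n : ℕ, (f 0 (n+1) : ℝ)/(b:ℝ)^(n+1) with ht
  refine ⟨t, fun i hi => ?_⟩
  refine ⟨f i, fun n hn => hflt i n hn, fun n hn hns => hfD i n hn hns, ?_⟩
  set d : ℕ → ℝ := fun n => if j ≤ n ∧ n < j+m then (f i (n+1) : ℝ)/(b:ℝ)^(n+1) else 0 with hd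
  have hdsupp : ∀ n ∉ Finset.Ico j (j+m), d n = 0 := by
    intro n hn
    rw [Finset.mem_Ico] at hn
    simp only [hd, if_neg (by omega : ¬(j ≤ n ∧ n < j+m))]
  have hsumd : Summable d := summable_of_ne_finset_zero hdsupp
  have hpt : ∀ n : ℕ, (f i (n+1) : ℝ)/(b:ℝ)^(n+1) = (f 0 (n+1) : ℝ)/(b:ℝ)^(n+1) + d n := by
    intro n
    by_cases h : j ≤ n ∧ n < j+m
    · have hw : j+1 ≤ n+1 ∧ n+1 ≤ j+m := by omega
      have hf0 : f 0 (n+1) = 0 := by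
        simp only [hf, if_pos hw, Nat.zero_div, Nat.zero_mod]
      simp only [hd, if_pos h, hf0, Nat.cast_zero, zero_div, zero_add]
    · have hw : ¬(j+1 ≤ n+1 ∧ n+1 ≤ j+m) := by omega
      simp only [hd, if_neg h, hf, if_neg hw, add_zero]
  have htd : ∑' n, d n = (i : ℝ)/(b:ℝ)^(j+m) := by
    rw [tsum_eq_sum hdsupp]
    have hIco : ∀ n ∈ Finset.Ico j (j+m), d n
        = ((i / b^(m-1-(n-j)) % b : ℕ) : ℝ)/(b:ℝ)^(n+1) := by
      intro n hn
      rw [Finset.mem_Ico] at hn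
      have h : j ≤ n ∧ n < j+m := hn
      have hw : j+1 ≤ n+1 ∧ n+1 ≤ j+m := by omega
      simp only [hd, if_pos h, hf, if_pos hw]
      have he : j + m - (n+1) = m-1-(n-j) := by omega
      rw [he]
    rw [Finset.sum_congr rfl hIco, Finset.sum_Ico_eq_sum_range]
    have key : ∀ s ∈ Finset.range m,
        ((i / b^(m-1-(j+s-j)) % b : ℕ) : ℝ)/(b:ℝ)^(j+s+1)
        = (((i / b^(m-1-s) % b) * b^(m-1-s) : ℕ) : ℝ)/(b:ℝ)^(j+m) := by
      intro s hs
      rw [Finset.mem_range] at hs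
      have hsj : j + s - j = s := by omega
      rw [hsj, Nat.cast_mul, Nat.cast_pow]
      rw [div_eq_div_iff (by positivity) (by positivity)]
      rw [mul_assoc, ← pow_add, show (m-1-s)+(j+s+1) = j+m from by omega]
    rw [show j+m-j = m from by omega]
    rw [Finset.sum_congr rfl key, ← Finset.sum_div, ← Nat.cast_sum]
    have hnat : ∑ s ∈ Finset.range m, (i / b^(m-1-s) % b) * b^(m-1-s) = i := by
      have := Finset.sum_range_reflect (fun e => i / b^e % b * b^e) m
      rw [this]
      exact digit_sum (by omega) m i hi
    rw [hnat]
  rw [tsum_congr hpt, Summable.tsum_add (hsummi 0) hsumd, htd, ← ht]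

lemma ball_sub_Icc (x R : ℝ) : Metric.ball x R ⊆ Set.Icc (x - R) (x + R) := by
  intro y hy
  rw [mem_ball, Real.dist_eq, abs_lt] at hy
  constructor <;> linarith [hy.1, hy.2]

set_option maxHeartbeats 2000000 in
lemma forward_lower {E : Set ℝ} (hE : E ⊆ Set.Icc 0 1)
    (hAP : ∀ k : ℕ, 3 ≤ k → ∃ t δ : ℝ, 0 < δ ∧ ∀ j : ℕ, j < k → t + j*δ ∈ E)
    {α : ℝ} (hα : α ∈ dimSet E) : 1 ≤ α := by
  obtain ⟨hα0, ρ, C, hρ, hC, hcov⟩ := hα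
  by_contra hlt
  push_neg at hlt
  have hα1 : α ≤ 1 := hlt.le
  -- key claim
  have key : ∀ M : ℕ, ∃ m : ℕ, M ≤ m ∧ 1 ≤ m ∧ (m:ℝ) ≤ 36*C*(m:ℝ)^α := by
    intro M
    set k : ℕ := 3 + M + ⌈2*((M:ℝ)+1)/ρ⌉₊ with hk
    have hk3 : 3 ≤ k := by omega
    obtain ⟨t, δ, hδ, hAPk⟩ := hAP k hk3
    have htE : t ∈ E := by
      have := hAPk 0 (by omega)
      simpa using this
    have ht0 : 0 ≤ t := (hE htE).1
    have hklR : (2:ℝ) ≤ (k:ℝ) - 1 := by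
      have : (3:ℕ) ≤ k := hk3
      have : (3:ℝ) ≤ (k:ℝ) := by exact_mod_cast this
      linarith
    have htop : t + ((k:ℝ)-1)*δ ≤ 1 := by
      have h := hAPk (k-1) (by omega)
      have hcast : ((k-1:ℕ):ℝ) = (k:ℝ) - 1 := by
        rw [Nat.cast_sub (by omega), Nat.cast_one]
      rw [hcast] at h
      exact (hE h).2
    have hδle : δ ≤ 1/((k:ℝ)-1) := by
      rw [le_div_iff₀ (by linarith)]
      nlinarith
    have hkρ : (M:ℝ) + 1 ≤ ρ * ((k:ℝ)-1) / 2 := by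
      have h1 : (⌈2*((M:ℝ)+1)/ρ⌉₊ : ℝ) ≤ (k:ℝ) - 1 := by
        have h : (⌈2*((M:ℝ)+1)/ρ⌉₊ : ℕ) + 1 ≤ k := by omega
        have h' : ((⌈2*((M:ℝ)+1)/ρ⌉₊:ℕ):ℝ) + 1 ≤ (k:ℝ) := by exact_mod_cast h
        linarith
      have h2 : 2*((M:ℝ)+1)/ρ ≤ (⌈2*((M:ℝ)+1)/ρ⌉₊ : ℝ) := Nat.le_ceil _
      have h3 : 2*((M:ℝ)+1)/ρ ≤ (k:ℝ) - 1 := le_trans h2 h1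
      rw [div_le_iff₀ hρ] at h3
      nlinarith
    have hsep' : ∀ (m' : ℕ) (i j : Fin m'), i ≠ j → 2*(δ/3) < |(t + (i:ℕ)*δ) - (t + (j:ℕ)*δ)| := by
      intro m' i j hij
      have h1 : |(t + (i:ℕ)*δ) - (t + (j:ℕ)*δ)| = |((i:ℕ):ℝ) - ((j:ℕ):ℝ)| * δ := by
        have he : (t + (i:ℕ)*δ) - (t + (j:ℕ)*δ) = (((i:ℕ):ℝ) - ((j:ℕ):ℝ))*δ := by ring
        rw [he, abs_mul, abs_of_pos hδ]
      rw [h1]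
      have h2 : (1:ℝ) ≤ |((i:ℕ):ℝ) - ((j:ℕ):ℝ)| := by
        have : (i:ℕ) ≠ (j:ℕ) := fun h => hij (Fin.ext h)
        rcases Nat.lt_or_ge (i:ℕ) (j:ℕ) with h | h
        · rw [abs_sub_comm]
          rw [le_abs]
          left
          have hh : (i:ℕ) + 1 ≤ (j:ℕ) := h
          have hh' : ((i:ℕ):ℝ) + 1 ≤ ((j:ℕ):ℝ) := by exact_mod_cast hh
          linarith
        · have hlt' : (j:ℕ) < (i:ℕ) := by omega
          rw [le_abs]
          left
          have hh : (j:ℕ) + 1 ≤ (i:ℕ) := hlt'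
          have hh' : ((j:ℕ):ℝ) + 1 ≤ ((i:ℕ):ℝ) := by exact_mod_cast hh
          linarith
      nlinarith
    by_cases hcase : (k:ℝ)*δ < ρ
    · -- small scale: R = kδ
      refine ⟨k, by omega, by omega, ?_⟩
      set R : ℝ := (k:ℝ)*δ with hR
      set r : ℝ := δ/3 with hr
      have hr0 : 0 < r := by positivity
      have hrR : r < R := by
        rw [hr, hR]
        nlinarith
      have hRρ : R < ρ := hcase
      have hsub : Metric.ball t R ∩ E ⊆ Set.Icc (t - R) (t + R) :=
        fun y hy => ball_sub_Icc t R hy.1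
      have hmem : ∀ i : Fin k, (t + (i:ℕ)*δ) ∈ Metric.ball t R ∩ E := by
        intro i
        refine ⟨?_, hAPk i i.isLt⟩
        rw [mem_ball, Real.dist_eq]
        have hik : ((i:ℕ):ℝ) ≤ (k:ℝ) - 1 := by
          have hh : (i:ℕ) + 1 ≤ k := i.isLt
          have hh' : ((i:ℕ):ℝ) + 1 ≤ (k:ℝ) := by exact_mod_cast hh
          linarith
        rw [abs_lt]
        constructor
        · nlinarith
        · rw [hR]; nlinarith
      have hlow : (k:ℕ) ≤ covNum r (Metric.ball t R ∩ E) :=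
        le_covNum t R hr0 (by positivity) hsub _ hmem (fun i j hij => hsep' k i j hij)
      have hup := hcov r R hr0 hrR hRρ t htE
      have hRr : R / r = 3*(k:ℝ) := by
        rw [hR, hr]
        field_simp
      have h3k : (3*(k:ℝ))^α ≤ 3*(k:ℝ)^α := by
        rw [Real.mul_rpow (by norm_num) (by positivity)]
        have : (3:ℝ)^α ≤ 3 := by
          calc (3:ℝ)^α ≤ (3:ℝ)^(1:ℝ) := Real.rpow_le_rpow_of_exponent_le (by norm_num) hα1
            _ = 3 := Real.rpow_one 3
        have hk0 : (0:ℝ) ≤ (k:ℝ)^α := Real.rpow_nonneg (by positivity) α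
        nlinarith
      have : (k:ℝ) ≤ C * (3*(k:ℝ))^α := by
        calc (k:ℝ) ≤ (covNum r (Metric.ball t R ∩ E) : ℝ) := by exact_mod_cast hlow
          _ ≤ C * (R/r)^α := hup
          _ = C * (3*(k:ℝ))^α := by rw [hRr]
      calc (k:ℝ) ≤ C * (3*(k:ℝ))^α := this
        _ ≤ C * (3*(k:ℝ)^α) := mul_le_mul_of_nonneg_left h3k hC.le
        _ ≤ 36*C*(k:ℝ)^α := by
            have h0 : (0:ℝ) ≤ (k:ℝ)^α := Real.rpow_nonneg (by positivity) α
            nlinarith [mul_nonneg hC.le h0]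
    · -- large scale: R = ρ/2
      push_neg at hcase
      set R : ℝ := ρ/2 with hR
      set r : ℝ := δ/3 with hr
      have hr0 : 0 < r := by positivity
      have hδR : δ ≤ R := by
        have h1 : δ ≤ 1/((k:ℝ)-1) := hδle
        have h2 : 1/((k:ℝ)-1) ≤ R := by
          rw [hR, div_le_div_iff₀ (by linarith) (by norm_num)]
          nlinarith
        linarith
      set m : ℕ := ⌊R/δ⌋₊ with hm
      have hRδ1 : 1 ≤ R/δ := by
        rw [le_div_iff₀ hδ]
        linarith
      have hm1 : 1 ≤ m := Nat.le_floor (by exact_mod_cast hRδ1)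
      have hmM : M + 1 ≤ m := by
        apply Nat.le_floor
        have h1 : ((M:ℝ)+1) ≤ ρ*((k:ℝ)-1)/2 := hkρ
        have h2 : ρ*((k:ℝ)-1)/2 ≤ R/δ := by
          rw [hR, div_le_div_iff₀ (by norm_num) hδ]
          have : ((k:ℝ)-1)*δ ≤ 1 := by nlinarith
          nlinarith
        push_cast
        linarith
      have hmfl : (m:ℝ) ≤ R/δ := Nat.floor_le (by positivity)
      have hmk : m < k := by
        have h1 : (m:ℝ) ≤ R/δ := hmfl
        have h2 : R/δ < (k:ℝ) := by
          rw [hR, div_lt_iff₀ hδ]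
          nlinarith
        exact_mod_cast lt_of_le_of_lt h1 h2
      refine ⟨m, by omega, hm1, ?_⟩
      have hrR : r < R := by
        rw [hr]
        linarith
      have hRρ : R < ρ := by rw [hR]; linarith
      have hsub : Metric.ball t R ∩ E ⊆ Set.Icc (t - R) (t + R) :=
        fun y hy => ball_sub_Icc t R hy.1
      have hmem : ∀ i : Fin m, (t + (i:ℕ)*δ) ∈ Metric.ball t R ∩ E := by
        intro i
        refine ⟨?_, hAPk i (lt_trans i.isLt hmk)⟩
        rw [mem_ball, Real.dist_eq]
        have hik : ((i:ℕ):ℝ) ≤ (m:ℝ) - 1 := by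
          have hh : (i:ℕ) + 1 ≤ m := i.isLt
          have hh' : ((i:ℕ):ℝ) + 1 ≤ (m:ℝ) := by exact_mod_cast hh
          linarith
        have himδ : ((i:ℕ):ℝ)*δ < R := by
          have : ((m:ℝ)-1)*δ ≤ R - δ := by
            have : (m:ℝ)*δ ≤ R := by
              rw [← le_div_iff₀ hδ]
              exact hmfl
            nlinarith
          nlinarith
        rw [abs_lt]
        constructor
        · have : 0 ≤ ((i:ℕ):ℝ)*δ := by positivity
          linarith
        · linarith
      have hlow : (m:ℕ) ≤ covNum r (Metric.ball t R ∩ E) :=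
        le_covNum t R hr0 (by linarith) hsub _ hmem (fun i j hij => hsep' m i j hij)
      have hup := hcov r R hr0 hrR hRρ t htE
      have hRr : R / r = 3*(R/δ) := by
        rw [hr]
        field_simp
      have hR6m : R/r ≤ 6*(m:ℝ) := by
        rw [hRr]
        have h1 : R/δ < (m:ℝ) + 1 := Nat.lt_floor_add_one _
        have h2 : (1:ℝ) ≤ (m:ℝ) := by exact_mod_cast hm1
        nlinarith
      have h6m : (R/r)^α ≤ 6*(m:ℝ)^α := by
        calc (R/r)^α ≤ (6*(m:ℝ))^α := by
              apply Real.rpow_le_rpow (by positivity) hR6m hα0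
          _ = 6^α * (m:ℝ)^α := Real.mul_rpow (by norm_num) (by positivity)
          _ ≤ 6*(m:ℝ)^α := by
              have h61 : (6:ℝ)^α ≤ 6 := by
                calc (6:ℝ)^α ≤ (6:ℝ)^(1:ℝ) := Real.rpow_le_rpow_of_exponent_le (by norm_num) hα1
                  _ = 6 := Real.rpow_one 6
              have : (0:ℝ) ≤ (m:ℝ)^α := Real.rpow_nonneg (by positivity) α
              nlinarith
      calc (m:ℝ) ≤ (covNum r (Metric.ball t R ∩ E) : ℝ) := by exact_mod_cast hlow
        _ ≤ C * (R/r)^α := hup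
        _ ≤ C * (6*(m:ℝ)^α) := mul_le_mul_of_nonneg_left h6m hC.le
        _ ≤ 36*C*(m:ℝ)^α := by
            have h0 : (0:ℝ) ≤ (m:ℝ)^α := Real.rpow_nonneg (by positivity) α
            nlinarith [mul_nonneg hC.le h0]
  -- derive contradiction
  have h1α : (0:ℝ) < 1 - α := by linarith
  have htend := tendsto_rpow_atTop h1α
  have hev := htend.eventually_ge_atTop (36*C+1)
  rw [Filter.eventually_atTop] at hev
  obtain ⟨x0, hx0⟩ := hev
  obtain ⟨m, hMm, hm1, hmle⟩ := key ⌈x0⌉₊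
  have hm0 : (0:ℝ) < (m:ℝ) := by exact_mod_cast hm1
  have hx0m : x0 ≤ (m:ℝ) := by
    calc x0 ≤ (⌈x0⌉₊:ℝ) := Nat.le_ceil x0
      _ ≤ (m:ℝ) := by exact_mod_cast hMm
  have hge := hx0 (m:ℝ) hx0m
  have heq : (m:ℝ)^((1:ℝ)-α) = (m:ℝ)/(m:ℝ)^α := by
    rw [Real.rpow_sub hm0, Real.rpow_one]
  have hmα : (0:ℝ) < (m:ℝ)^α := Real.rpow_pos_of_pos hm0 α
  have hle36 : (m:ℝ)^((1:ℝ)-α) ≤ 36*C := by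
    rw [heq, div_le_iff₀ hmα]
    linarith [hmle]
  linarith

lemma blocks (b m0 : ℕ) (hm0 : 1 ≤ m0) (c : ℕ → ℕ) (hcb : ∀ n, c n ≤ b)
    (hgap : ∀ j : ℕ, ∃ n, j+1 ≤ n ∧ n ≤ j+m0 ∧ c n ≤ b - 1) :
    ∀ t u w, m0*t ≤ w → ∏ n ∈ Finset.range w, c (u+n+1) ≤ b^(w-t) * (b-1)^t := by
  intro t
  induction t with
  | zero =>
    intro u w _
    simp only [Nat.sub_zero, pow_zero, mul_one]
    calc ∏ n ∈ Finset.range w, c (u+n+1) ≤ ∏ _n ∈ Finset.range w, b :=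
          Finset.prod_le_prod' (fun i _ => hcb _)
      _ = b^w := by rw [Finset.prod_const, Finset.card_range]
  | succ t ih =>
    intro u w hw
    have hm0w : m0 ≤ w := by
      have h1 : m0 * 1 ≤ m0 * (t+1) := Nat.mul_le_mul_left m0 (by omega)
      omega
    have htw : m0 * t ≤ w - m0 := by
      have : m0*(t+1) = m0*t + m0 := by ring
      omega
    have hww : w = m0 + (w - m0) := by omega
    rw [hww, Finset.prod_range_add]
    have hfirst : ∏ n ∈ Finset.range m0, c (u+n+1) ≤ b^(m0-1) * (b-1) := by
      obtain ⟨n0, hn01, hn02, hn03⟩ := hgap u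
      set s0 : ℕ := n0 - u - 1 with hs0
      have hs0m : s0 ∈ Finset.range m0 := by rw [Finset.mem_range]; omega
      have hn0eq : u + s0 + 1 = n0 := by omega
      calc ∏ n ∈ Finset.range m0, c (u+n+1)
          ≤ ∏ n ∈ Finset.range m0, (if n = s0 then b-1 else b) := by
            apply Finset.prod_le_prod'
            intro i _
            by_cases h : i = s0
            · rw [if_pos h, h, hn0eq]; exact hn03
            · rw [if_neg h]; exact hcb _
        _ = (b-1) * ∏ n ∈ (Finset.range m0).erase s0, (if n = s0 then b-1 else b) := by
            rw [← Finset.mul_prod_erase _ _ hs0m, if_pos rfl]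
        _ = (b-1) * b^(m0-1) := by
            congr 1
            calc ∏ n ∈ (Finset.range m0).erase s0, (if n = s0 then b-1 else b)
                = ∏ n ∈ (Finset.range m0).erase s0, b := by
                  apply Finset.prod_congr rfl
                  intro i hi
                  rw [if_neg (Finset.ne_of_mem_erase hi)]
              _ = b^(m0-1) := by
                  rw [Finset.prod_const, Finset.card_erase_of_mem hs0m, Finset.card_range]
        _ = b^(m0-1) * (b-1) := by ring
    have hsecond := ih (u+m0) (w-m0) htw
    have hsecond' : ∏ n ∈ Finset.range (w-m0), c (u + (m0 + n) + 1) ≤ b^(w-m0-t) * (b-1)^t := by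
      have : ∀ n, u + (m0 + n) + 1 = (u+m0) + n + 1 := by intro n; omega
      simp only [this]
      exact hsecond
    calc (∏ n ∈ Finset.range m0, c (u+n+1)) * ∏ n ∈ Finset.range (w-m0), c (u+(m0+n)+1)
        ≤ (b^(m0-1) * (b-1)) * (b^(w-m0-t) * (b-1)^t) := Nat.mul_le_mul hfirst hsecond'
      _ = (b^(m0-1) * b^(w-m0-t)) * ((b-1)^t * (b-1)) := by ring
      _ = b^(m0+(w-m0)-(t+1)) * (b-1)^(t+1) := by
          rw [← pow_add, ← pow_succ]
          have htle : t ≤ w - m0 := le_trans (Nat.le_mul_of_pos_left t (by omega)) htw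
          have he : m0-1+(w-m0-t) = m0+(w-m0)-(t+1) := by omega
          rw [he]

set_option maxHeartbeats 2000000 in
lemma cover_mem_dimSet (hb : 2 ≤ b) {D S : Set ℕ} (hDb : D ⊆ Set.Iio b)
    {dm : ℕ} (hdm : dm < b) (hdmD : dm ∉ D)
    {m0 : ℕ} (hm0 : 1 ≤ m0)
    (hgap : ∀ j : ℕ, ∃ n, j+1 ≤ n ∧ n ≤ j+m0 ∧ n ∉ S) :
    ∃ α : ℝ, α < 1 ∧ α ∈ dimSet (ESD b D S) := by
  classical
  have hb0 : (0:ℝ) < b := by exact_mod_cast (by omega : 0 < b)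
  have hb1 : (1:ℝ) < b := by exact_mod_cast (by omega : 1 < b)
  have hbm1 : (0:ℝ) < (b:ℝ) - 1 := by linarith
  set γ : ℝ := ((b:ℝ)-1)/b with hγ
  have hγ0 : 0 < γ := by positivity
  have hγ1 : γ < 1 := by rw [hγ, div_lt_one hb0]; linarith
  set β : ℝ := γ ^ ((1:ℝ)/m0) with hβ
  have hβ0 : 0 < β := Real.rpow_pos_of_pos hγ0 _
  have hβ1 : β < 1 := Real.rpow_lt_one hγ0.le hγ1 (by positivity)
  set α : ℝ := 1 + Real.logb b β with hα
  have hbβ : (b:ℝ)^α = b * β := by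
    rw [hα, Real.rpow_add hb0, Real.rpow_one, Real.rpow_logb hb0 (by linarith) hβ0]
  have hα1 : α < 1 := by
    have : Real.logb b β < 0 := Real.logb_neg hb1 hβ0 hβ1
    rw [hα]; linarith
  have hα0 : 0 ≤ α := by
    have h1 : (b:ℝ)⁻¹ ≤ β := by
      have h2 : γ ≤ β := by
        calc γ = γ ^ (1:ℝ) := (Real.rpow_one γ).symm
          _ ≤ γ ^ ((1:ℝ)/m0) := by
              apply Real.rpow_le_rpow_of_exponent_ge hγ0 hγ1.le
              rw [div_le_one (by exact_mod_cast hm0.trans_lt' (by omega) : (0:ℝ) < m0)]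
              exact_mod_cast hm0
      have h3 : (b:ℝ)⁻¹ ≤ γ := by
        rw [hγ, inv_eq_one_div]
        gcongr
        have hb2 : (2:ℝ) ≤ (b:ℝ) := by exact_mod_cast hb
        linarith
      linarith
    have h4 : Real.logb b ((b:ℝ)⁻¹) ≤ Real.logb b β :=
      Real.logb_le_logb_of_le hb1 (by positivity) h1
    rw [Real.logb_inv, Real.logb_self_eq_one hb1] at h4
    rw [hα]; linarith
  refine ⟨α, hα1, hα0, 1, 6*(b:ℝ)^3, one_pos, by positivity, ?_⟩
  intro r R hr hrR hR1 x hxE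
  have hR0 : 0 < R := lt_trans hr hrR
  have h1R : 1 ≤ 1/R := by rw [le_div_iff₀ hR0]; linarith
  obtain ⟨u, hu1, hu2⟩ := exists_nat_pow_near h1R hb1
  have h1r : 1 ≤ 1/r := by rw [le_div_iff₀ hr]; nlinarith
  obtain ⟨v', hv1, hv2⟩ := exists_nat_pow_near h1r hb1
  set v : ℕ := v' + 1 with hv
  have huv : u + 1 ≤ v := by
    have hbuv : (b:ℝ)^u < (b:ℝ)^(v'+1) := by
      calc (b:ℝ)^u ≤ 1/R := hu1
        _ < 1/r := one_div_lt_one_div_of_lt hr hrR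
        _ < (b:ℝ)^(v'+1) := hv2
    have := (pow_lt_pow_iff_right₀ hb1).mp hbuv
    omega
  set w : ℕ := v - u with hw
  have hw1 : 1 ≤ w := by omega
  have hvuw : v = u + w := by omega
  have hRlow : 1/(b:ℝ)^(u+1) < R := by
    rw [div_lt_iff₀ (by positivity)]
    rw [div_lt_iff₀ hR0] at hu2
    nlinarith
  have hRup : R ≤ 1/(b:ℝ)^u := by
    rw [le_div_iff₀ (by positivity)]
    rw [le_div_iff₀ hR0] at hu1
    nlinarith
  have hrup : r ≤ 1/(b:ℝ)^v' := by
    rw [le_div_iff₀ (by positivity)]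
    rw [le_div_iff₀ hr] at hv1
    nlinarith
  have hrlow : 1/(b:ℝ)^v < r := by
    rw [div_lt_iff₀ (by positivity)]
    rw [div_lt_iff₀ hr] at hv2
    rw [hv]
    nlinarith
  set DF : Finset ℕ := (Finset.range b).filter (· ∈ D) with hDF
  have hDFcard : DF.card ≤ b - 1 := by
    have hsub : DF ⊆ (Finset.range b).erase dm := by
      intro a ha
      rw [hDF, Finset.mem_filter] at ha
      rw [Finset.mem_erase]
      exact ⟨fun h => hdmD (h ▸ ha.2), ha.1⟩
    calc DF.card ≤ ((Finset.range b).erase dm).card := Finset.card_le_card hsub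
      _ = b - 1 := by
          rw [Finset.card_erase_of_mem (by rw [Finset.mem_range]; exact hdm), Finset.card_range]
  set allowed : Fin w → Finset ℕ := fun i => if (u+(i:ℕ)+1) ∈ S then Finset.range b else DF
    with hallowed
  set B : Finset (Fin w → ℕ) := Fintype.piFinset allowed with hB
  set i0 : ℤ := ⌊(x - R) * (b:ℝ)^u⌋ - 1 with hi0
  set i1 : ℤ := ⌈(x + R) * (b:ℝ)^u⌉ with hi1
  set zfun : (Fin w → ℕ) → ℝ := fun q => ∑ i : Fin w, (q i : ℝ)/(b:ℝ)^(u+(i:ℕ)+1) with hzfun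
  set F : Finset ℝ :=
    ((Finset.Icc i0 i1) ×ˢ B).image (fun p => (p.1 : ℝ)/(b:ℝ)^u + zfun p.2) with hF
  have hcover : Metric.ball x R ∩ ESD b D S ⊆ ⋃ c ∈ F, closedBall c r := by
    rintro y ⟨hyb, f, hf1, hf2, hyeq⟩
    obtain ⟨Tu, hTu, hTu0, hTu1⟩ := esd_split hb f hf1 u
    obtain ⟨Tv, hTv, hTv0, hTv1⟩ := esd_split hb f hf1 v
    rw [← hyeq] at hTu hTv
    set M : ℕ := ∑ n ∈ Finset.range u, f (n+1) * b^(u-1-n) with hM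
    have hMsum : ((M:ℝ))/(b:ℝ)^u = ∑ n ∈ Finset.range u, (f (n+1):ℝ)/(b:ℝ)^(n+1) := by
      rw [hM]
      push_cast
      rw [Finset.sum_div]
      apply Finset.sum_congr rfl
      intro n hn
      rw [Finset.mem_range] at hn
      rw [div_eq_div_iff (by positivity) (by positivity), mul_assoc, ← pow_add,
        show u-1-n+(n+1) = u from by omega]
    set q : Fin w → ℕ := fun i => f (u+(i:ℕ)+1) with hqdef
    have hqB : q ∈ B := by
      rw [hB, Fintype.mem_piFinset]
      intro i
      simp only [hallowed]
      by_cases hS : (u+(i:ℕ)+1) ∈ S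
      · rw [if_pos hS, Finset.mem_range]; exact hf1 _ (by omega)
      · rw [if_neg hS, hDF, Finset.mem_filter, Finset.mem_range]
        exact ⟨hf1 _ (by omega), hf2 _ (by omega) hS⟩
    have hzq : zfun q = ∑ n ∈ Finset.range w, (f (u+n+1):ℝ)/(b:ℝ)^(u+n+1) := by
      rw [hzfun, Finset.sum_range (fun n => (f (u+n+1):ℝ)/(b:ℝ)^(u+n+1))]
    have hpartial : ∑ n ∈ Finset.range v, (f (n+1):ℝ)/(b:ℝ)^(n+1)
        = (M:ℝ)/(b:ℝ)^u + zfun q := by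
      rw [hvuw, Finset.sum_range_add, hMsum, hzq]
    have hyu : y = (M:ℝ)/(b:ℝ)^u + Tu := by rw [hTu, hMsum]
    have hyv : y = ((M:ℝ)/(b:ℝ)^u + zfun q) + Tv := by rw [hTv, hpartial]
    have hxy : |y - x| < R := by
      rw [← Real.dist_eq]; exact hyb
    have hyup : y < x + R := by
      have := (abs_lt.mp hxy).2; linarith
    have hylow : x - R < y := by
      have := (abs_lt.mp hxy).1; linarith
    have hMup : (M:ℝ)/(b:ℝ)^u ≤ y := by rw [hyu]; linarith
    have hMlow : y - 1/(b:ℝ)^u ≤ (M:ℝ)/(b:ℝ)^u := by rw [hyu]; linarith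
    have hbu0 : (0:ℝ) < (b:ℝ)^u := by positivity
    have hMi0 : i0 ≤ (M:ℕ) := by
      have h1 : ((i0:ℤ):ℝ) < (M:ℝ) := by
        rw [hi0]
        push_cast
        have hfl : (⌊(x - R) * (b:ℝ)^u⌋ : ℝ) ≤ (x-R)*(b:ℝ)^u := Int.floor_le _
        have h2 : x - R - 1/(b:ℝ)^u < (M:ℝ)/(b:ℝ)^u := by linarith
        rw [sub_lt_iff_lt_add] at h2 ⊢
        have h4 : (x - R - 1/(b:ℝ)^u) * (b:ℝ)^u < (M:ℝ) := by
          rw [← lt_div_iff₀ hbu0]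
          linarith
        have h5 : (x - R - 1/(b:ℝ)^u) * (b:ℝ)^u = (x-R)*(b:ℝ)^u - 1 := by
          field_simp
        nlinarith
      have : (i0:ℤ) < ((M:ℕ):ℤ) := by exact_mod_cast h1
      omega
    have hMi1 : ((M:ℕ):ℤ) ≤ i1 := by
      have h1 : (M:ℝ) ≤ ((i1:ℤ):ℝ) := by
        rw [hi1]
        have h2 : (M:ℝ) ≤ y * (b:ℝ)^u := by
          rw [div_le_iff₀ hbu0] at hMup
          exact hMup
        have h3 : y * (b:ℝ)^u ≤ (x+R)*(b:ℝ)^u := by nlinarith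
        calc (M:ℝ) ≤ (x+R)*(b:ℝ)^u := by linarith
          _ ≤ (⌈(x + R) * (b:ℝ)^u⌉ : ℝ) := Int.le_ceil _
      exact_mod_cast h1
    have hcF : (M:ℝ)/(b:ℝ)^u + zfun q ∈ F := by
      rw [hF, Finset.mem_image]
      refine ⟨(((M:ℕ):ℤ), q), ?_, ?_⟩
      · rw [Finset.mem_product]
        exact ⟨Finset.mem_Icc.mpr ⟨hMi0, hMi1⟩, hqB⟩
      · push_cast
        ring
    rw [Set.mem_iUnion₂]
    refine ⟨_, hcF, ?_⟩
    rw [mem_closedBall, Real.dist_eq]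
    have he : y - ((M:ℝ)/(b:ℝ)^u + zfun q) = Tv := by rw [hyv]; ring
    rw [he, abs_of_nonneg hTv0]
    calc Tv ≤ 1/(b:ℝ)^v := hTv1
      _ ≤ r := hrlow.le
  set t : ℕ := w / m0 with htdef
  have htw : t ≤ w := Nat.div_le_self _ _
  have hcard : (covNum r (Metric.ball x R ∩ ESD b D S) : ℝ)
      ≤ 6 * ((b:ℝ)^(w-t) * ((b:ℝ)-1)^t) := by
    have h1 : covNum r (Metric.ball x R ∩ ESD b D S) ≤ F.card := covNum_le_card hcover
    have h2 : F.card ≤ (Finset.Icc i0 i1).card * B.card := by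
      calc F.card ≤ ((Finset.Icc i0 i1) ×ˢ B).card := Finset.card_image_le
        _ = _ := Finset.card_product _ _
    have hIccCard : ((Finset.Icc i0 i1).card : ℝ) ≤ 6 := by
      have h3 : i1 + 1 - i0 ≤ 6 := by
        have hc1 : ((i1:ℤ):ℝ) < (x+R)*(b:ℝ)^u + 1 := by
          rw [hi1]; exact Int.ceil_lt_add_one _
        have hc2 : (x - R)*(b:ℝ)^u - 2 < ((i0:ℤ):ℝ) := by
          rw [hi0]
          push_cast
          have := Int.lt_floor_add_one ((x - R)*(b:ℝ)^u)
          linarith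
        have hRbu : R * (b:ℝ)^u ≤ 1 := by
          rw [le_div_iff₀ (by positivity)] at hRup
          exact hRup
        have h4 : ((i1 + 1 - i0 : ℤ):ℝ) ≤ 6 := by
          push_cast
          nlinarith
        exact_mod_cast h4
      calc ((Finset.Icc i0 i1).card : ℝ) = (((i1+1-i0).toNat : ℕ) : ℝ) := by
            rw [Int.card_Icc]
        _ ≤ 6 := by
            have h5 : (i1+1-i0).toNat ≤ 6 := Int.toNat_le.mpr (by exact_mod_cast h3)
            exact_mod_cast h5
    have hBcard : (B.card : ℝ) ≤ (b:ℝ)^(w-t) * ((b:ℝ)-1)^t := by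
      classical
      set cf : ℕ → ℕ := fun n => if n ∈ S then b else b - 1 with hcf
      have hle : ∀ i : Fin w, (allowed i).card ≤ cf (u+(i:ℕ)+1) := by
        intro i
        simp only [hallowed, hcf]
        by_cases hS : (u+(i:ℕ)+1) ∈ S
        · rw [if_pos hS, if_pos hS, Finset.card_range]
        · rw [if_neg hS, if_neg hS]; exact hDFcard
      have h4 : B.card ≤ ∏ i : Fin w, cf (u+(i:ℕ)+1) := by
        rw [hB, Fintype.card_piFinset]
        exact Finset.prod_le_prod' (fun i _ => hle i)
      have h5 : ∏ i : Fin w, cf (u+(i:ℕ)+1) = ∏ n ∈ Finset.range w, cf (u+n+1) :=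
        (Finset.prod_range (fun n => cf (u+n+1))).symm
      have h6 : ∏ n ∈ Finset.range w, cf (u+n+1) ≤ b^(w-t) * (b-1)^t := by
        apply blocks b m0 hm0 cf
        · intro n; simp only [hcf]; split <;> omega
        · intro j
          obtain ⟨n, hn1, hn2, hn3⟩ := hgap j
          exact ⟨n, hn1, hn2, by simp only [hcf]; rw [if_neg hn3]⟩
        · rw [htdef, Nat.mul_comm]
          exact Nat.div_mul_le_self w m0
      have h7 : B.card ≤ b^(w-t) * (b-1)^t := by
        rw [h5] at h4
        omega
      have h8 : ((b^(w-t) * (b-1)^t : ℕ) : ℝ) = (b:ℝ)^(w-t) * ((b:ℝ)-1)^t := by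
        push_cast [Nat.cast_sub (show 1 ≤ b by omega)]
        norm_num
      calc (B.card : ℝ) ≤ ((b^(w-t) * (b-1)^t : ℕ) : ℝ) := by exact_mod_cast h7
        _ = _ := h8
    calc (covNum r (Metric.ball x R ∩ ESD b D S) : ℝ)
        ≤ (F.card : ℝ) := by exact_mod_cast h1
      _ ≤ ((Finset.Icc i0 i1).card : ℝ) * (B.card : ℝ) := by exact_mod_cast h2
      _ ≤ 6 * ((b:ℝ)^(w-t) * ((b:ℝ)-1)^t) := by
          apply mul_le_mul hIccCard hBcard (Nat.cast_nonneg _) (by norm_num)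
  -- final rpow chain
  have hbv' : (0:ℝ) < (b:ℝ)^v' := by positivity
  have hRr : (b:ℝ)^w/(b:ℝ)^2 ≤ R/r := by
    have hrinv : (b:ℝ)^v' ≤ 1/r := hv1
    have h1 : (1/(b:ℝ)^(u+1)) * (b:ℝ)^v' ≤ R * (1/r) :=
      mul_le_mul hRlow.le hrinv (by positivity) hR0.le
    have h2 : R * (1/r) = R/r := by ring
    have h3 : (1/(b:ℝ)^(u+1)) * (b:ℝ)^v' = (b:ℝ)^w/(b:ℝ)^2 := by
      rw [div_mul_eq_mul_div, one_mul, div_eq_div_iff (by positivity) (by positivity),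
        ← pow_add, ← pow_add]
      congr 1
      omega
    rw [← h3, ← h2]
    exact h1
  have hfinal : 6 * ((b:ℝ)^(w-t) * ((b:ℝ)-1)^t) ≤ 6*(b:ℝ)^3 * (R/r)^α := by
    have s1 : ((b:ℝ)^w/(b:ℝ)^2)^α ≤ (R/r)^α :=
      Real.rpow_le_rpow (by positivity) hRr hα0
    have s2 : ((b:ℝ)^w/(b:ℝ)^2)^α = ((b:ℝ)^w)^α / ((b:ℝ)^2)^α :=
      Real.div_rpow (by positivity) (by positivity) α
    have s3 : ((b:ℝ)^w)^α = ((b:ℝ)^α)^w := by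
      rw [← Real.rpow_natCast (b:ℝ) w, ← Real.rpow_natCast ((b:ℝ)^α) w,
        ← Real.rpow_mul hb0.le, ← Real.rpow_mul hb0.le, mul_comm]
    have s4 : ((b:ℝ)^2)^α ≤ (b:ℝ)^2 := by
      calc ((b:ℝ)^2)^α ≤ ((b:ℝ)^2)^(1:ℝ) :=
            Real.rpow_le_rpow_of_exponent_le (by nlinarith) hα1.le
        _ = (b:ℝ)^2 := Real.rpow_one _
    have s5 : ((b:ℝ)^α)^w = (b:ℝ)^w * β^w := by rw [hbβ, mul_pow]
    have s6 : γ^(t+1) ≤ β^w := by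
      have e1 : β^w = γ ^ ((w:ℝ)/m0) := by
        rw [hβ, ← Real.rpow_natCast (γ ^ ((1:ℝ)/(m0:ℝ))) w, ← Real.rpow_mul hγ0.le]
        congr 1
        ring
      have e2 : (w:ℝ)/(m0:ℝ) ≤ (t:ℝ)+1 := by
        have hm0R : (0:ℝ) < (m0:ℝ) := by exact_mod_cast hm0
        rw [div_le_iff₀ hm0R]
        have hdm := Nat.div_add_mod w m0
        have hmod : w % m0 < m0 := Nat.mod_lt _ (by omega)
        have he1 : (w:ℝ) = (m0:ℝ)*(t:ℝ) + ((w % m0 : ℕ):ℝ) := by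
          rw [htdef]; exact_mod_cast hdm.symm
        have he2 : ((w % m0 : ℕ):ℝ) < (m0:ℝ) := by exact_mod_cast hmod
        nlinarith
      calc γ^(t+1) = γ^(((t+1:ℕ)):ℝ) := (Real.rpow_natCast γ (t+1)).symm
        _ ≤ γ ^ ((w:ℝ)/(m0:ℝ)) := by
            apply Real.rpow_le_rpow_of_exponent_ge hγ0 hγ1.le
            push_cast
            exact e2
        _ = β^w := e1.symm
    have s7 : 6*(b:ℝ)^3 * (((b:ℝ)^w * γ^(t+1))/(b:ℝ)^2) ≤ 6*(b:ℝ)^3 * (R/r)^α := by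
      apply mul_le_mul_of_nonneg_left ?_ (by positivity)
      calc ((b:ℝ)^w * γ^(t+1))/(b:ℝ)^2 ≤ ((b:ℝ)^w * β^w)/(b:ℝ)^2 := by
            apply (div_le_div_iff_of_pos_right (by positivity : (0:ℝ) < (b:ℝ)^2)).mpr
            exact mul_le_mul_of_nonneg_left s6 (by positivity)
        _ = ((b:ℝ)^α)^w / (b:ℝ)^2 := by rw [s5]
        _ ≤ ((b:ℝ)^α)^w / ((b:ℝ)^2)^α := by
            apply div_le_div_of_nonneg_left ?_ ?_ s4
            · positivity
            · positivity
        _ = ((b:ℝ)^w)^α / ((b:ℝ)^2)^α := by rw [s3]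
        _ = ((b:ℝ)^w/(b:ℝ)^2)^α := s2.symm
        _ ≤ (R/r)^α := s1
    refine le_trans ?_ s7
    have e3 : 6*(b:ℝ)^3 * (((b:ℝ)^w * γ^(t+1))/(b:ℝ)^2)
        = 6*((b:ℝ)^(w-t) * ((b:ℝ)-1)^t) * ((b:ℝ)-1) := by
      rw [hγ, div_pow]
      have e4 : (b:ℝ)^w = (b:ℝ)^(w-t)*(b:ℝ)^t := by rw [← pow_add]; congr 1; omega
      have e5 : ((b:ℝ)-1)^(t+1) = ((b:ℝ)-1)^t*((b:ℝ)-1) := pow_succ _ _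
      have e6 : (b:ℝ)^(t+1) = (b:ℝ)^t*(b:ℝ) := pow_succ _ _
      rw [e4, e5, e6]
      field_simp
    rw [e3]
    have hpos : (0:ℝ) ≤ 6*((b:ℝ)^(w-t) * ((b:ℝ)-1)^t) :=
      mul_nonneg (by norm_num) (mul_nonneg (by positivity) (pow_nonneg hbm1.le t))
    have hb2 : (2:ℝ) ≤ (b:ℝ) := by exact_mod_cast hb
    calc 6*((b:ℝ)^(w-t) * ((b:ℝ)-1)^t)
        = 6*((b:ℝ)^(w-t) * ((b:ℝ)-1)^t)*1 := by ring
      _ ≤ 6*((b:ℝ)^(w-t) * ((b:ℝ)-1)^t)*((b:ℝ)-1) :=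
          mul_le_mul_of_nonneg_left (by linarith) hpos
  calc (covNum r (Metric.ball x R ∩ ESD b D S) : ℝ)
      ≤ 6 * ((b:ℝ)^(w-t) * ((b:ℝ)-1)^t) := hcard
    _ ≤ 6*(b:ℝ)^3 * (R/r)^α := hfinal

lemma esd_subset_Icc (hb : 2 ≤ b) {D S : Set ℕ} : ESD b D S ⊆ Set.Icc 0 1 := by
  rintro x ⟨f, hf1, hf2, hx⟩
  have h := tail_facts hb (fun n => f (n+1)) (fun n => hf1 _ (by omega)) 0
  rw [hx]
  exact ⟨h.2.1, le_trans h.2.2 (by norm_num)⟩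

lemma one_mem_dimSet (E : Set ℝ) : (1:ℝ) ∈ dimSet E := by
  refine ⟨zero_le_one, 1, 2, one_pos, two_pos, ?_⟩
  intro r R hr hrR hR1 x hx
  obtain ⟨F, hFc, hFcov⟩ := grid_cover x R r hr (lt_trans hr hrR)
  have h1 : covNum r (Metric.ball x R ∩ E) ≤ F.card :=
    covNum_le_card (fun y hy => hFcov (ball_sub_Icc x R hy.1))
  have h2 : (1:ℝ) ≤ R/r := by rw [le_div_iff₀ hr]; linarith
  calc (covNum r (Metric.ball x R ∩ E) : ℝ) ≤ (F.card : ℝ) := by exact_mod_cast h1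
    _ ≤ R/r + 1 := hFc
    _ ≤ 2*(R/r)^(1:ℝ) := by rw [Real.rpow_one]; linarith

theorem stmt6 (b : ℕ) (hb : 2 ≤ b) (D : Set ℕ) (hD : D.Nonempty)
    (hDb : D ⊆ Set.Iio b) (hDp : D ≠ Set.Iio b) (S : Set ℕ) (hS : S.Infinite) :
    (∀ k : ℕ, 3 ≤ k → ∃ t δ : ℝ, 0 < δ ∧ ∀ j : ℕ, j < k → t + j * δ ∈ ESD b D S)
      ↔ assouadDim (ESD b D S) = 1 := by
  have hbdd : BddBelow (dimSet (ESD b D S)) := ⟨0, fun a ha => ha.1⟩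
  have hone : (1:ℝ) ∈ dimSet (ESD b D S) := one_mem_dimSet _
  constructor
  · intro hAP
    rw [assouadDim_eq]
    apply le_antisymm
    · exact csInf_le hbdd hone
    · exact le_csInf ⟨1, hone⟩ (fun a ha => forward_lower (esd_subset_Icc hb) hAP ha)
  · intro hdim k hk
    by_contra hno
    push_neg at hno
    have hgap : ∀ j : ℕ, ∃ n, j+1 ≤ n ∧ n ≤ j+k ∧ n ∉ S := by
      intro j
      by_contra hg
      push_neg at hg
      obtain ⟨d0, hd0D⟩ := hD
      have hd0 : d0 < b := hDb hd0D
      obtain ⟨t, ht⟩ := run_to_AP hb hd0D hd0 j k hg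
      obtain ⟨j', hj', hnot⟩ := hno t (1/(b:ℝ)^(j+k)) (by positivity)
      apply hnot
      have hik : j' < b^k := lt_trans hj' (Nat.lt_pow_self (by omega))
      have h := ht j' hik
      rw [mul_one_div]
      exact h
    obtain ⟨dm, hdmb, hdmD⟩ : ∃ dm, dm < b ∧ dm ∉ D := by
      by_contra h
      push_neg at h
      apply hDp
      ext n
      exact ⟨fun hn => hDb hn, fun hn => h n hn⟩
    obtain ⟨α, hα1, hαmem⟩ := cover_mem_dimSet hb hDb hdmb hdmD (show 1 ≤ k by omega) hgap
    have hle : assouadDim (ESD b D S) ≤ α := by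
      rw [assouadDim_eq]
      exact csInf_le hbdd hαmem
    rw [hdim] at hle
    linarith
end

section
/- Let b ≥ 2, D ⊊ {0,...,b-1} nonempty, S ⊆ ℕ with ℕ \ S infinite, and let d ∈ {0,...,b-1} \ D. If k+1 ∉ S, then for every x ∈ E_{S,D}, the fractional part {b^k x} does not lie in the open interval (d/b, (d+1)/b). -/
lemma aux_summable (b : ℕ) (hb : 2 ≤ b) (c : ℕ → ℕ) (hc : ∀ n, c n < b) :
    Summable (fun n => (c n : ℝ) / (b : ℝ) ^ (n + 1)) := by
  have hb1 : (1 : ℝ) < b := by exact_mod_cast hb.trans_lt' one_lt_two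
  have hb0 : (0 : ℝ) < b := by linarith
  have hr : (1 : ℝ) / b < 1 := by rw [div_lt_one hb0]; linarith
  have hr0 : (0 : ℝ) ≤ 1 / b := by positivity
  have hg : Summable (fun n : ℕ => (b : ℝ) * ((1 : ℝ) / b) ^ (n + 1)) :=
    ((summable_geometric_of_lt_one hr0 hr).mul_left _).comp_injective
      (add_left_injective 1)
  refine Summable.of_nonneg_of_le (fun n => by positivity) (fun n => ?_) hg
  have hcb : (c n : ℝ) ≤ b := by exact_mod_cast (hc n).le
  calc (c n : ℝ) / (b : ℝ) ^ (n + 1) = (c n : ℝ) * ((1 : ℝ) / b) ^ (n + 1) := by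
        rw [div_pow, one_pow, div_eq_mul_inv, div_eq_mul_inv, one_mul]
    _ ≤ (b : ℝ) * ((1 : ℝ) / b) ^ (n + 1) :=
        mul_le_mul_of_nonneg_right hcb (by positivity)

lemma aux_tsum_le (b : ℕ) (hb : 2 ≤ b) (c : ℕ → ℕ) (hc : ∀ n, c n < b) :
    (∑' n : ℕ, (c n : ℝ) / (b : ℝ) ^ (n + 1)) ≤ 1 := by
  have hb1 : (1 : ℝ) < b := by exact_mod_cast hb.trans_lt' one_lt_two
  have hb0 : (0 : ℝ) < b := by linarith
  have hr : (1 : ℝ) / b < 1 := by rw [div_lt_one hb0]; linarith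
  have hr0 : (0 : ℝ) ≤ 1 / b := by positivity
  have hgs : Summable (fun n : ℕ => (((b : ℝ) - 1) / b) * ((1 : ℝ) / b) ^ n) :=
    (summable_geometric_of_lt_one hr0 hr).mul_left _
  have hkey : ∀ n : ℕ, (((b : ℝ) - 1) / b) * ((1 : ℝ) / b) ^ n
      = ((b : ℝ) - 1) / (b : ℝ) ^ (n + 1) := by
    intro n
    rw [div_pow, one_pow, div_mul_div_comm, mul_one, ← pow_succ']
  have hle : ∀ n : ℕ, (c n : ℝ) / (b : ℝ) ^ (n + 1)
      ≤ (((b : ℝ) - 1) / b) * ((1 : ℝ) / b) ^ n := by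
    intro n
    rw [hkey n]
    have h1 : (c n : ℝ) ≤ (b : ℝ) - 1 := by
      have hcn : (c n : ℝ) + 1 ≤ b := by exact_mod_cast hc n
      linarith
    gcongr
  have := Summable.tsum_le_tsum hle (aux_summable b hb c hc) hgs
  refine this.trans ?_
  rw [tsum_mul_left, tsum_geometric_of_lt_one hr0 hr]
  have hbne : (b : ℝ) ≠ 0 := ne_of_gt hb0
  have hbne1 : (b : ℝ) - 1 ≠ 0 := by linarith
  field_simp
  exact le_rfl

lemma aux_tsum_nonneg (b : ℕ) (c : ℕ → ℕ) :
    0 ≤ ∑' n : ℕ, (c n : ℝ) / (b : ℝ) ^ (n + 1) :=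
  tsum_nonneg (fun n => by positivity)

theorem stmt7 (b : ℕ) (hb : 2 ≤ b) (D : Set ℕ) (hD : D.Nonempty)
    (hDb : D ⊆ Set.Iio b) (hDp : D ≠ Set.Iio b) (S : Set ℕ)
    (hSc : (Sᶜ : Set ℕ).Infinite) (d : ℕ) (hd : d < b) (hdD : d ∉ D)
    (k : ℕ) (hk : k + 1 ∉ S) :
    ∀ x ∈ ESD b D S,
      Int.fract ((b : ℝ) ^ k * x) ∉ Set.Ioo ((d : ℝ) / b) (((d : ℝ) + 1) / b) := by
  rintro x ⟨f, hfb, hfD, rfl⟩ hmem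
  have hb1 : (1 : ℝ) < b := by exact_mod_cast hb.trans_lt' one_lt_two
  have hb0 : (0 : ℝ) < b := by linarith
  set m := f (k + 1) with hm
  have hmD : m ∈ D := hfD (k + 1) (by omega) hk
  have hmd : m ≠ d := fun h => hdD (h ▸ hmD)
  -- summability of the full series and of shifts
  have hc1 : ∀ n : ℕ, f (n + 1) < b := fun n => hfb (n + 1) (by omega)
  have hc2 : ∀ n : ℕ, f (n + k + 1) < b := fun n => hfb (n + k + 1) (by omega)
  have hc3 : ∀ n : ℕ, f (n + k + 2) < b := fun n => hfb (n + k + 2) (by omega)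
  have hs1 := aux_summable b hb (fun n => f (n + 1)) hc1
  have hs2 := aux_summable b hb (fun n => f (n + k + 1)) hc2
  have hs3 := aux_summable b hb (fun n => f (n + k + 2)) hc3
  -- rewrite b^k * x
  set y : ℝ := ∑' n : ℕ, (f (n + k + 1) : ℝ) / (b : ℝ) ^ (n + 1) with hy
  have hmul : (b : ℝ) ^ k * ∑' n : ℕ, (f (n + 1) : ℝ) / (b : ℝ) ^ (n + 1)
      = ∑' n : ℕ, (b : ℝ) ^ k * ((f (n + 1) : ℝ) / (b : ℝ) ^ (n + 1)) := by
    rw [tsum_mul_left]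
  have hsmul : Summable (fun n : ℕ => (b : ℝ) ^ k * ((f (n + 1) : ℝ) / (b : ℝ) ^ (n + 1))) :=
    hs1.mul_left _
  have hsplit := Summable.sum_add_tsum_nat_add (f := fun n : ℕ =>
      (b : ℝ) ^ k * ((f (n + 1) : ℝ) / (b : ℝ) ^ (n + 1))) k hsmul
  have htail : (∑' n : ℕ, (b : ℝ) ^ k * ((f (n + k + 1) : ℝ) / (b : ℝ) ^ (n + k + 1))) = y := by
    rw [hy]
    apply tsum_congr
    intro n
    have hpow : (b : ℝ) ^ (n + k + 1) = (b : ℝ) ^ k * (b : ℝ) ^ (n + 1) := by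
      rw [← pow_add]; congr 1; omega
    rw [hpow]
    field_simp
  -- the finite part is a natural number
  set M : ℕ := ∑ i ∈ Finset.range k, f (i + 1) * b ^ (k - i - 1) with hM
  have hfin : (∑ i ∈ Finset.range k, (b : ℝ) ^ k * ((f (i + 1) : ℝ) / (b : ℝ) ^ (i + 1)))
      = (M : ℝ) := by
    rw [hM, Nat.cast_sum]
    apply Finset.sum_congr rfl
    intro i hi
    have hik : i < k := Finset.mem_range.mp hi
    have hpow : (b : ℝ) ^ k = (b : ℝ) ^ (i + 1) * (b : ℝ) ^ (k - i - 1) := by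
      rw [← pow_add]; congr 1; omega
    rw [hpow]
    push_cast
    field_simp
  have hbkx : (b : ℝ) ^ k * ∑' n : ℕ, (f (n + 1) : ℝ) / (b : ℝ) ^ (n + 1) = (M : ℝ) + y := by
    rw [hmul, ← hsplit, hfin]
    rw [← htail]
  rw [hbkx] at hmem
  have hfract : Int.fract ((M : ℝ) + y) = Int.fract y := by
    have : ((M : ℕ) : ℝ) = ((M : ℤ) : ℝ) := by push_cast; ring
    rw [this, Int.fract_intCast_add]
  rw [hfract] at hmem
  -- bounds on y
  have hy0 : 0 ≤ y := aux_tsum_nonneg b _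
  have hy1 : y ≤ 1 := aux_tsum_le b hb _ hc2
  -- split off first digit
  have hyeq : y = (m : ℝ) / b + ∑' n : ℕ, (f (n + 1 + k + 1) : ℝ) / (b : ℝ) ^ (n + 1 + 1) := by
    rw [hy, Summable.tsum_eq_zero_add hs2]
    norm_num
    rfl
  set r : ℝ := ∑' n : ℕ, (f (n + 1 + k + 1) : ℝ) / (b : ℝ) ^ (n + 1 + 1) with hr
  have hr_eq : r = (1 / b) * ∑' n : ℕ, (f (n + k + 2) : ℝ) / (b : ℝ) ^ (n + 1) := by
    rw [hr, ← tsum_mul_left]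
    apply tsum_congr
    intro n
    have h1 : n + 1 + k + 1 = n + k + 2 := by omega
    rw [h1, pow_succ']
    field_simp
  have hr0 : 0 ≤ r := by
    rw [hr_eq]
    have := aux_tsum_nonneg b (fun n => f (n + k + 2))
    positivity
  have hr1 : r ≤ 1 / b := by
    rw [hr_eq]
    have h1 := aux_tsum_le b hb (fun n => f (n + k + 2)) hc3
    have h2 : (0 : ℝ) < 1 / b := by positivity
    calc (1 / b) * ∑' n : ℕ, (f (n + k + 2) : ℝ) / (b : ℝ) ^ (n + 1)
        ≤ (1 / (b : ℝ)) * 1 := mul_le_mul_of_nonneg_left h1 h2.le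
      _ = 1 / b := by ring
  have hylow : (m : ℝ) / b ≤ y := by rw [hyeq]; linarith
  have hyhigh : y ≤ ((m : ℝ) + 1) / b := by
    rw [hyeq]
    have : ((m : ℝ) + 1) / b = (m : ℝ) / b + 1 / b := by ring
    rw [this]
    linarith
  -- case split on y = 1
  rcases lt_or_ge y 1 with hylt | hyge
  · rw [Int.fract_eq_self.mpr ⟨hy0, hylt⟩] at hmem
    obtain ⟨h1, h2⟩ := hmem
    -- d/b < y ≤ (m+1)/b gives d < m+1 ; m/b ≤ y < (d+1)/b gives m < d+1
    have hdm : (d : ℝ) < (m : ℝ) + 1 := by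
      have := h1.trans_le hyhigh
      exact (div_lt_div_iff_of_pos_right hb0).mp this
    have hmd2 : (m : ℝ) < (d : ℝ) + 1 := by
      have := hylow.trans_lt h2
      exact (div_lt_div_iff_of_pos_right hb0).mp this
    have : m = d := by
      have h3 : d < m + 1 := by exact_mod_cast hdm
      have h4 : m < d + 1 := by exact_mod_cast hmd2
      omega
    exact hmd this
  · have hyone : y = 1 := le_antisymm hy1 hyge
    rw [hyone, Int.fract_one] at hmem
    have : (0:ℝ) ≤ (d : ℝ) / b := by positivity
    exact absurd hmem.1 (not_lt.mpr this)
end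

section
/- Let b ≥ 2, D ⊊ {0,...,b-1} nonempty, S ⊆ ℕ with ℕ \ S infinite and 1 ∉ S. Then for every probability measure μ supported on E_{S,D}, limsup_{|n|→∞} |μ̂(n)| > 0, where μ̂(n) = ∫ e^{-2πint} dμ(t) for n ∈ ℤ. -/
open MeasureTheory Filter
open Real

lemma normA (b : ℕ) (hb : 2 ≤ b) (α : ℝ) (h1 : π/b ≤ |α|) (h2 : |α| ≤ 2*π - π/b) :
    2/b ≤ ‖Complex.exp (α * Complex.I) - 1‖ := by
  have hbpos : (0:ℝ) < b := by positivity
  have hb2 : (2:ℝ) ≤ b := by exact_mod_cast hb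
  have hπ : (0:ℝ) < π := pi_pos
  have hπb : 0 < π / b := by positivity
  have hπbπ : π / b ≤ π := by
    rw [div_le_iff₀ hbpos]; nlinarith
  have hcos : Real.cos α ≤ Real.cos (π/b) := by
    rcases le_or_gt |α| π with h | h
    · calc Real.cos α = Real.cos |α| := (Real.cos_abs α).symm
        _ ≤ Real.cos (π/b) := Real.cos_le_cos_of_nonneg_of_le_pi hπb.le h h1
    · have he : Real.cos α = Real.cos (2*π - |α|) := by
        rw [Real.cos_two_pi_sub, Real.cos_abs]
      rw [he]
      exact Real.cos_le_cos_of_nonneg_of_le_pi hπb.le (by linarith) (by linarith)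
  have hcb : Real.cos (π/b) ≤ 1 - 2/b^2 := by
    have h3 := Real.cos_le_one_sub_mul_cos_sq (x := π/b) (by rw [abs_of_pos hπb]; exact hπbπ)
    have h4 : 2/π^2 * (π/b)^2 = 2/b^2 := by field_simp
    linarith [h3, h4.symm ▸ h3]
  have hz : ‖Complex.exp (α * Complex.I) - 1‖^2 = (Real.cos α - 1)^2 + (Real.sin α)^2 := by
    rw [Complex.sq_norm, Complex.normSq_apply]
    simp [Complex.exp_ofReal_mul_I_re, Complex.exp_ofReal_mul_I_im]; ring
  have hs := Real.sin_sq_add_cos_sq α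
  have e1 : (Real.cos α - 1)^2 + (Real.sin α)^2 = 2 - 2*Real.cos α := by nlinarith [hs]
  have h4b : (2/(b:ℝ))^2 = 4/(b:ℝ)^2 := by ring
  have h4c : 4/(b:ℝ)^2 ≤ 2 - 2*Real.cos α := by
    have : Real.cos α ≤ 1 - 2/(b:ℝ)^2 := le_trans hcos hcb
    have h5 : 4/(b:ℝ)^2 = 2*(2/(b:ℝ)^2) := by ring
    linarith
  have hge : (2/(b:ℝ))^2 ≤ ‖Complex.exp (α * Complex.I) - 1‖^2 := by
    rw [hz, e1, h4b]; exact h4c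
  have hn : (0:ℝ) ≤ ‖Complex.exp (α * Complex.I) - 1‖ := norm_nonneg _
  nlinarith

lemma geomB (N : ℕ) (z : ℂ) (hz1 : ‖z‖ ≤ 1) (c : ℝ) (hc : 0 < c) (hzc : c ≤ ‖z - 1‖) :
    ‖∑ j ∈ Finset.range N, z^j‖ ≤ 2 / c := by
  have hzne : z ≠ 1 := by
    intro h; rw [h] at hzc; simp at hzc; linarith
  rw [geom_sum_eq hzne]
  rw [norm_div]
  have h1 : ‖z^N - 1‖ ≤ 2 := by
    calc ‖z^N - 1‖ ≤ ‖z^N‖ + ‖(1:ℂ)‖ := norm_sub_le _ _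
      _ ≤ 1 + 1 := by
          rw [norm_pow]; simp
          exact pow_le_one₀ (norm_nonneg z) hz1
      _ = 2 := by norm_num
  have h2 : c ≤ ‖z - 1‖ := hzc
  have h3 : 0 < ‖z - 1‖ := lt_of_lt_of_le hc hzc
  calc ‖z^N - 1‖/‖z-1‖ ≤ 2/‖z-1‖ := by gcongr
    _ ≤ 2/c := by gcongr


lemma digitC (b : ℕ) (hb : 2 ≤ b) (f : ℕ → ℕ) (hf : ∀ n, 1 ≤ n → f n < b) (k : ℕ) :
    ∃ M : ℤ, ∃ u : ℝ, (b:ℝ)^k * (∑' n : ℕ, (f (n+1) : ℝ) / (b:ℝ)^(n+1)) = M + u ∧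
      (f (k+1) : ℝ)/b ≤ u ∧ u ≤ ((f (k+1) : ℝ)+1)/b := by
  have hbpos : (0:ℝ) < b := by positivity
  have hb1 : (1:ℝ) < b := by exact_mod_cast lt_of_lt_of_le one_lt_two hb
  have hbne : (b:ℝ) ≠ 0 := ne_of_gt hbpos
  have hinv : (1:ℝ)/b < 1 := by rw [div_lt_one hbpos]; exact hb1
  have hinvnn : (0:ℝ) ≤ 1/b := by positivity
  have hdig : ∀ n : ℕ, ((f (n+1) : ℝ)) ≤ b - 1 := by
    intro n
    have h1 := hf (n+1) (Nat.le_add_left 1 n)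
    have h2 : f (n+1) ≤ b - 1 := Nat.le_sub_one_of_lt h1
    calc ((f (n+1):ℝ)) ≤ ((b-1 : ℕ) : ℝ) := by exact_mod_cast h2
      _ = (b:ℝ) - 1 := by
        have h3 : (1:ℕ) ≤ b := le_trans one_le_two hb
        push_cast [h3]; ring
  have hsum : ∀ j : ℕ, Summable (fun n : ℕ => (f (n+j+1) : ℝ) / (b:ℝ)^(n+1)) := by
    intro j
    refine Summable.of_nonneg_of_le (fun n => by positivity) (fun n => ?_)
      (summable_geometric_of_lt_one hinvnn hinv)
    rw [div_pow, one_pow]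
    rw [div_le_div_iff₀ (by positivity) (by positivity), pow_succ]
    have h1 : (f (n+j+1):ℝ) ≤ b - 1 := hdig (n+j)
    nlinarith [mul_le_mul_of_nonneg_right h1 (pow_pos hbpos n).le, pow_pos hbpos n]
  have hsum0 : Summable (fun n : ℕ => (f (n+1) : ℝ) / (b:ℝ)^(n+1)) := by
    simpa using hsum 0
  set g : ℕ → ℝ := fun n => (b:ℝ)^k * ((f (n+1) : ℝ) / (b:ℝ)^(n+1)) with hg
  have hgsum : Summable g := hsum0.mul_left _
  have hmul : (b:ℝ)^k * (∑' n : ℕ, (f (n+1) : ℝ) / (b:ℝ)^(n+1)) = ∑' n, g n :=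
    (tsum_mul_left).symm
  have hsplit := Summable.sum_add_tsum_nat_add k hgsum
  set M : ℤ := ∑ i ∈ Finset.range k, (f (i+1) : ℤ) * (b:ℤ)^(k-1-i) with hM
  have hMeq : (M : ℝ) = ∑ i ∈ Finset.range k, g i := by
    rw [hM]
    push_cast
    apply Finset.sum_congr rfl
    intro i hi
    have hik : i < k := Finset.mem_range.mp hi
    rw [hg]
    have hpow : (b:ℝ)^k = (b:ℝ)^(i+1) * (b:ℝ)^(k-1-i) := by
      rw [← pow_add]; congr 1; omega
    field_simp [hpow]
    rw [hpow]; ring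
  set u : ℝ := ∑' n : ℕ, (f (n+k+1) : ℝ) / (b:ℝ)^(n+1) with hu
  have htail : (∑' n : ℕ, g (n + k)) = u := by
    rw [hu]
    apply tsum_congr
    intro n
    rw [hg]
    have hpow : (b:ℝ)^(n+k+1) = (b:ℝ)^k * (b:ℝ)^(n+1) := by rw [← pow_add]; congr 1; omega
    field_simp [hpow]
    ring
  have hsplit1 := Summable.sum_add_tsum_nat_add 1 (hsum k)
  have htailnn : 0 ≤ ∑' n : ℕ, (f (n+1+k+1) : ℝ) / (b:ℝ)^(n+1+1) := by
    apply tsum_nonneg; intro n; positivity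
  have hfirst : ∑ n ∈ Finset.range 1, (f (n+k+1) : ℝ) / (b:ℝ)^(n+1) = (f (k+1):ℝ)/b := by
    simp
  have htop : (∑' n : ℕ, (f (n+1+k+1) : ℝ) / (b:ℝ)^(n+1+1)) ≤ 1/b := by
    have hgeo : ∑' n : ℕ, ((b:ℝ)-1)/(b:ℝ)^2 * (1/b)^n = ((b:ℝ)-1)/(b:ℝ)^2 * (1-1/(b:ℝ))⁻¹ := by
      rw [tsum_mul_left, tsum_geometric_of_lt_one hinvnn hinv]
    have hval : ((b:ℝ)-1)/(b:ℝ)^2 * (1-1/(b:ℝ))⁻¹ = 1/b := by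
      rw [inv_eq_one_div]
      have h1b : (1:ℝ) - 1/(b:ℝ) = ((b:ℝ)-1)/b := by field_simp
      rw [h1b]
      have hbm1 : (b:ℝ) - 1 ≠ 0 := by nlinarith
      field_simp
    calc (∑' n : ℕ, (f (n+1+k+1) : ℝ) / (b:ℝ)^(n+1+1))
        ≤ ∑' n : ℕ, ((b:ℝ)-1)/(b:ℝ)^2 * (1/b)^n := by
          apply Summable.tsum_le_tsum _ _ ((summable_geometric_of_lt_one hinvnn hinv).mul_left _)
          · intro n
            have h1 : (f (n+1+k+1):ℝ) ≤ b - 1 := hdig (n+1+k)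
            have hpow : (b:ℝ)^(n+1+1) = (b:ℝ)^2 * (b:ℝ)^n := by rw [← pow_add]; congr 1; omega
            rw [hpow, div_pow, one_pow]
            rw [div_le_iff₀ (by positivity)]
            have hbn : (0:ℝ) < (b:ℝ)^n := pow_pos hbpos n
            have key : ((b:ℝ)-1)/(b:ℝ)^2 * (1/(b:ℝ)^n) * ((b:ℝ)^2 * (b:ℝ)^n) = (b:ℝ)-1 := by
              field_simp
            nlinarith [key]
          · -- summability of LHS
            apply ((hsum (k+1)).mul_left ((1:ℝ)/b)).congr
            intro n
            have hidx : n+(k+1)+1 = n+1+k+1 := by omega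
            rw [hidx, show n+1+1 = (n+1)+1 from rfl, pow_succ]
            rw [div_mul_div_comm, one_mul, mul_comm]
            congr 1
      _ = 1/b := by rw [hgeo, hval]
  refine ⟨M, u, ?_, ?_, ?_⟩
  · rw [hmul, ← hsplit, hMeq, htail]
  · rw [hu, ← hsplit1, hfirst]
    linarith
  · rw [hu, ← hsplit1, hfirst]
    have hsplitb : ((f (k+1):ℝ)+1)/b = (f (k+1):ℝ)/b + 1/(b:ℝ) := by ring
    linarith


set_option maxHeartbeats 1000000 in
theorem stmt9 (b : ℕ) (hb : 2 ≤ b) (D : Set ℕ) (hD : D.Nonempty)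
    (hDb : D ⊆ Set.Iio b) (hDp : D ≠ Set.Iio b) (S : Set ℕ)
    (hSc : (Sᶜ : Set ℕ).Infinite) (h1 : 1 ∉ S)
    (μ : Measure ℝ) [IsProbabilityMeasure μ] (hsupp : μ (ESD b D S)ᶜ = 0) :
    0 < Filter.limsup
      (fun n : ℤ => ‖∫ t : ℝ, Complex.exp (-2 * Real.pi * Complex.I * n * t) ∂μ‖)
      Filter.cofinite := by
  have hbpos : (0:ℝ) < b := by positivity
  have hb2 : (2:ℝ) ≤ b := by exact_mod_cast hb
  have hπ : (0:ℝ) < π := pi_pos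
  set int : ℤ → ℂ := fun n => ∫ t : ℝ, Complex.exp (-2 * Real.pi * Complex.I * n * t) ∂μ
    with hint
  set F : ℤ → ℝ := fun n => ‖int n‖ with hF
  have hexpnorm : ∀ (n : ℤ) (t : ℝ), ‖Complex.exp (-2 * Real.pi * Complex.I * n * t)‖ = 1 := by
    intro n t
    have h : (-2 * (Real.pi:ℂ) * Complex.I * n * t) = ((-2*π*n*t : ℝ) : ℂ) * Complex.I := by
      push_cast; ring
    rw [h]
    exact Complex.norm_exp_ofReal_mul_I _
  have hcont : ∀ n : ℤ, Continuous (fun t : ℝ => Complex.exp (-2 * Real.pi * Complex.I * n * t)) := by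
    intro n; fun_prop
  have hintg : ∀ n : ℤ, Integrable (fun t : ℝ => Complex.exp (-2 * Real.pi * Complex.I * n * t)) μ := by
    intro n
    refine Integrable.mono' (integrable_const (1:ℝ)) ((hcont n).aestronglyMeasurable) ?_
    filter_upwards with t
    rw [hexpnorm n t]
  have hint0 : int 0 = 1 := by
    rw [hint]; simp
  have hF1 : ∀ n : ℤ, F n ≤ 1 := by
    intro n
    rw [hF, hint]
    calc ‖∫ t : ℝ, Complex.exp (-2 * Real.pi * Complex.I * n * t) ∂μ‖
        ≤ 1 * (μ Set.univ).toReal := by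
          apply norm_integral_le_of_norm_le_const
          filter_upwards with t
          rw [hexpnorm n t]
      _ = 1 := by simp
  by_contra hcon
  rw [not_lt] at hcon
  set c : ℝ := 1/(4*(b:ℝ)^2) with hc
  have hcpos : 0 < c := by rw [hc]; positivity
  have hbdd : IsBoundedUnder (· ≤ ·) cofinite F := isBoundedUnder_of ⟨1, hF1⟩
  have hev : ∀ᶠ n in cofinite, F n < c :=
    eventually_lt_of_limsup_lt (lt_of_le_of_lt hcon hcpos) hbdd
  rw [eventually_cofinite] at hev
  obtain ⟨B, hB⟩ : ∃ B : ℕ, ∀ n : ℤ, ¬ F n < c → n.natAbs ≤ B := by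
    obtain ⟨B, hB⟩ := (hev.image Int.natAbs).bddAbove
    exact ⟨B, fun n hn => hB (Set.mem_image_of_mem _ hn)⟩
  have hsmall : ∀ n : ℤ, B < n.natAbs → F n < c := by
    intro n hn
    by_contra h
    exact absurd (hB n h) (by omega)
  obtain ⟨d, hdb, hdD⟩ : ∃ d, d < b ∧ d ∉ D := by
    by_contra h
    push_neg at h
    exact hDp (Set.Subset.antisymm hDb (fun d hd => h d hd))
  obtain ⟨m, hmS, hmB⟩ := hSc.exists_gt B
  set k : ℕ := m - 1 with hk
  have hk1 : k + 1 = m := by omega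
  have hkS : k + 1 ∉ S := by rw [hk1]; exact hmS
  have hBk : B < b ^ k := by
    have h2k : k < 2 ^ k := Nat.lt_two_pow_self
    have hle : 2 ^ k ≤ b ^ k := Nat.pow_le_pow_left hb k
    omega
  -- setup analytic objects
  set m0 : ℝ := (2*(d:ℝ)+1)/(2*b) with hm0
  set θ : ℝ → ℝ := fun t => 2*π*((b:ℝ)^k*t - m0) with hθ
  set w : ℝ → ℂ := fun t => Complex.exp ((θ t : ℝ) * Complex.I) with hw
  set N : ℕ := 2*b^2 with hN
  set G : ℝ → ℂ := fun t => ∑ j ∈ Finset.range N, (w t)^j with hG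
  have hwnorm : ∀ t, ‖w t‖ = 1 := fun t => Complex.norm_exp_ofReal_mul_I _
  -- pointwise bound on the support
  have hGbound : ∀ x ∈ ESD b D S, ‖G x‖ ≤ b := by
    intro x hx
    obtain ⟨f, hf, hfD, hxe⟩ := hx
    obtain ⟨M, u, hMu, hul, huu⟩ := digitC b hb f hf k
    have hfk : f (k+1) ∈ D := hfD (k+1) (by omega) hkS
    have hfkd : f (k+1) ≠ d := fun h => hdD (h ▸ hfk)
    have hfkb : f (k+1) < b := hf (k+1) (by omega)
    have hfkr : (f (k+1) : ℝ) + 1 ≤ b := by exact_mod_cast hfkb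
    have hdr : (d:ℝ) + 1 ≤ b := by exact_mod_cast hdb
    have hu0 : 0 ≤ u := le_trans (by positivity) hul
    have hu1 : u ≤ 1 := by
      refine le_trans huu ?_
      rw [div_le_one hbpos]; exact hfkr
    have havoid : u ≤ (d:ℝ)/b ∨ ((d:ℝ)+1)/b ≤ u := by
      rcases lt_or_gt_of_ne hfkd with h | h
      · left
        refine le_trans huu ?_
        have hfd : (f (k+1) : ℝ) + 1 ≤ d := by exact_mod_cast h
        gcongr
      · right
        refine le_trans ?_ hul
        have hfd : (d:ℝ) + 1 ≤ f (k+1) := by exact_mod_cast h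
        gcongr
    set α : ℝ := 2*π*(u - m0) with hα
    have hwx : w x = Complex.exp ((α : ℝ) * Complex.I) := by
      rw [hw]
      have hθx : θ x = 2*π*(M:ℝ) + α := by
        rw [hθ]
        simp only
        rw [hxe, hMu, hα]
        ring
      simp only [hθx]
      have hsplit : ((2*π*(M:ℝ) + α : ℝ):ℂ) * Complex.I
          = (M:ℂ) * (2*(π:ℂ)*Complex.I) + ((α : ℝ):ℂ)*Complex.I := by
        push_cast; ring
      rw [hsplit, Complex.exp_add, Complex.exp_int_mul_two_pi_mul_I, one_mul]
    -- bounds on |α|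
    have hm0l : 1/(2*(b:ℝ)) ≤ m0 := by
      rw [hm0]
      have hd0 : (0:ℝ) ≤ d := Nat.cast_nonneg d
      gcongr
      linarith
    have hm0u : m0 ≤ 1 - 1/(2*(b:ℝ)) := by
      rw [hm0]
      rw [div_le_iff₀ (by positivity)]
      have hbb : (1/(2*(b:ℝ)))*(2*(b:ℝ)) = 1 := by field_simp
      nlinarith [hdr, hbb]
    have hd1 : (d:ℝ)/b - m0 = -(1/(2*b)) := by
      rw [hm0]; field_simp; ring
    have hd2 : ((d:ℝ)+1)/b - m0 = 1/(2*b) := by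
      rw [hm0]; field_simp; ring
    have h8 : 1/(2*(b:ℝ)) ≤ |u - m0| ∧ |u - m0| ≤ 1 - 1/(2*(b:ℝ)) := by
      have hpos2b : (0:ℝ) < 1/(2*(b:ℝ)) := by positivity
      rcases havoid with h | h
      · have hneg : u - m0 ≤ -(1/(2*(b:ℝ))) := by linarith
        rw [abs_of_nonpos (by linarith)]
        constructor <;> linarith
      · have hpos' : 1/(2*(b:ℝ)) ≤ u - m0 := by linarith
        rw [abs_of_nonneg (by linarith)]
        constructor <;> linarith
    have habs1 : π/b ≤ |α| := by
      have : |α| = 2*π*|u - m0| := by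
        rw [hα, abs_mul, abs_of_pos (by positivity)]
      rw [this]
      have he : 2*π*(1/(2*(b:ℝ))) = π/b := by field_simp
      have h9 := mul_le_mul_of_nonneg_left h8.1 (by positivity : (0:ℝ) ≤ 2*π)
      linarith
    have habs2 : |α| ≤ 2*π - π/b := by
      have : |α| = 2*π*|u - m0| := by
        rw [hα, abs_mul, abs_of_pos (by positivity)]
      rw [this]
      have he : 2*π*(1 - 1/(2*(b:ℝ))) = 2*π - π/b := by field_simp
      have h9 := mul_le_mul_of_nonneg_left h8.2 (by positivity : (0:ℝ) ≤ 2*π)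
      linarith
    have hdist : 2/(b:ℝ) ≤ ‖w x - 1‖ := by
      rw [hwx]; exact normA b hb α habs1 habs2
    have hgb := geomB N (w x) (le_of_eq (hwnorm x)) (2/b) (by positivity) hdist
    calc ‖G x‖ = ‖∑ j ∈ Finset.range N, (w x)^j‖ := by rw [hG]
      _ ≤ 2/(2/(b:ℝ)) := hgb
      _ = b := by field_simp
  -- continuity of G
  have hwcont : Continuous w := by
    rw [hw]
    apply Complex.continuous_exp.comp
    apply Continuous.mul _ continuous_const
    apply Complex.continuous_ofReal.comp
    rw [hθ]
    fun_prop
  have hGcont : Continuous G := by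
    rw [hG]
    exact continuous_finset_sum _ (fun j _ => hwcont.pow j)
  set h : ℝ → ℝ := fun t => ‖G t‖^2 with hh
  have hGN : ∀ t, ‖G t‖ ≤ N := by
    intro t
    calc ‖G t‖ ≤ ∑ j ∈ Finset.range N, ‖(w t)^j‖ := by rw [hG]; exact norm_sum_le _ _
      _ = ∑ j ∈ Finset.range N, 1 := by
          apply Finset.sum_congr rfl
          intro j _
          rw [norm_pow, hwnorm, one_pow]
      _ = N := by simp
  have hhint : Integrable h μ := by
    refine Integrable.mono' (integrable_const ((N:ℝ)^2)) ?_ ?_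
    · exact ((hGcont.norm).pow 2).aestronglyMeasurable
    · filter_upwards with t
      rw [hh]
      simp only [Real.norm_eq_abs, abs_pow, abs_norm]
      exact pow_le_pow_left₀ (norm_nonneg _) (hGN t) 2
  -- upper bound
  have hupper : ∫ t, h t ∂μ ≤ (b:ℝ)^2 := by
    have hae0 : ∀ᵐ t ∂μ, t ∈ ESD b D S := by
      rw [MeasureTheory.ae_iff]
      exact hsupp
    have hae : ∀ᵐ t ∂μ, h t ≤ (b:ℝ)^2 := by
      filter_upwards [hae0] with t ht
      rw [hh]
      exact pow_le_pow_left₀ (norm_nonneg _) (hGbound t ht) 2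
    calc ∫ t, h t ∂μ ≤ ∫ _t, ((b:ℝ)^2) ∂μ := integral_mono_ae hhint (integrable_const _) hae
      _ = (b:ℝ)^2 := by simp
  -- expansion into Fourier coefficients
  set nn : ℕ → ℕ → ℤ := fun j l => -(((j:ℤ) - l)) * (b:ℤ)^k with hnn
  set C : ℕ → ℕ → ℂ := fun j l => Complex.exp (((-(2*π*(((j:ℝ)-l)*m0))) : ℝ) * Complex.I)
    with hC
  have hCnorm : ∀ j l, ‖C j l‖ = 1 := fun j l => Complex.norm_exp_ofReal_mul_I _
  have hterm : ∀ j l, (fun t : ℝ => (w t)^j * (starRingEnd ℂ) ((w t)^l))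
      = fun t : ℝ => C j l * Complex.exp (-2 * Real.pi * Complex.I * ((nn j l : ℤ):ℂ) * (t:ℂ)) := by
    intro j l
    funext t
    rw [hw]
    simp only
    rw [← Complex.exp_nat_mul, ← Complex.exp_nat_mul, ← Complex.exp_conj, ← Complex.exp_add]
    rw [hC]
    simp only
    rw [← Complex.exp_add]
    congr 1
    have hconj : (starRingEnd ℂ) ((l:ℂ) * (((θ t : ℝ):ℂ) * Complex.I))
        = (l:ℂ) * (((θ t : ℝ):ℂ) * (-Complex.I)) := by
      simp [map_mul, Complex.conj_ofReal, Complex.conj_I]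
    rw [hconj, hθ, hnn]
    simp only
    push_cast
    ring
  have hintterm : ∀ j l, ∫ t, (w t)^j * (starRingEnd ℂ) ((w t)^l) ∂μ
      = C j l * int (nn j l) := by
    intro j l
    rw [hterm j l]
    rw [show (fun t : ℝ => C j l * Complex.exp (-2 * Real.pi * Complex.I * ((nn j l : ℤ):ℂ) * (t:ℂ)))
        = fun t : ℝ => C j l • Complex.exp (-2 * Real.pi * Complex.I * ((nn j l : ℤ):ℂ) * (t:ℂ)) from rfl,
      integral_smul, smul_eq_mul, hint]
  have htermint : ∀ j l, Integrable (fun t : ℝ => (w t)^j * (starRingEnd ℂ) ((w t)^l)) μ := by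
    intro j l
    rw [hterm j l]
    exact (hintg (nn j l)).const_mul _
  have hhc : ∀ t : ℝ, ((h t : ℝ) : ℂ)
      = ∑ j ∈ Finset.range N, ∑ l ∈ Finset.range N, (w t)^j * (starRingEnd ℂ) ((w t)^l) := by
    intro t
    have h1 : ((h t : ℝ):ℂ) = G t * (starRingEnd ℂ) (G t) := by
      rw [Complex.mul_conj]
      norm_cast
      rw [hh]
      simp only
      rw [Complex.normSq_eq_norm_sq]
    rw [h1, hG]
    rw [map_sum, Finset.sum_mul_sum]
  have hkey : ((∫ t, h t ∂μ : ℝ) : ℂ)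
      = ∑ j ∈ Finset.range N, ∑ l ∈ Finset.range N, C j l * int (nn j l) := by
    rw [show ((∫ t, h t ∂μ : ℝ) : ℂ) = ∫ t, ((h t : ℝ):ℂ) ∂μ from (integral_ofReal (𝕜 := ℂ)).symm]
    calc ∫ t, ((h t : ℝ):ℂ) ∂μ
        = ∫ t, ∑ j ∈ Finset.range N, ∑ l ∈ Finset.range N,
            (w t)^j * (starRingEnd ℂ) ((w t)^l) ∂μ := by
          congr 1; funext t; exact hhc t
      _ = ∑ j ∈ Finset.range N, ∫ t, ∑ l ∈ Finset.range N,
            (w t)^j * (starRingEnd ℂ) ((w t)^l) ∂μ := by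
          apply integral_finset_sum
          intro j _
          exact integrable_finset_sum _ (fun l _ => htermint j l)
      _ = ∑ j ∈ Finset.range N, ∑ l ∈ Finset.range N, C j l * int (nn j l) := by
          apply Finset.sum_congr rfl
          intro j _
          rw [integral_finset_sum _ (fun l _ => htermint j l)]
          exact Finset.sum_congr rfl (fun l _ => hintterm j l)
  have hre : (∫ t, h t ∂μ)
      = ∑ j ∈ Finset.range N, ∑ l ∈ Finset.range N, (C j l * int (nn j l)).re := by
    have h2 := congrArg Complex.re hkey
    rw [Complex.ofReal_re] at h2
    rw [h2]
    rw [Complex.re_sum]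
    exact Finset.sum_congr rfl (fun j _ => by rw [Complex.re_sum])
  -- lower bound each term
  have htermlb : ∀ j l : ℕ, (if j = l then (1:ℝ) else -c) ≤ (C j l * int (nn j l)).re := by
    intro j l
    by_cases hjl : j = l
    · subst hjl
      have hC0 : C j j = 1 := by
        rw [hC]
        simp
      have hn0 : nn j j = 0 := by rw [hnn]; simp
      rw [hC0, hn0, hint0, one_mul]
      simp
    · have hnbig : B < (nn j l).natAbs := by
        rw [hnn]
        have hjl' : (j:ℤ) - l ≠ 0 := by
          intro hcontr
          apply hjl
          omega
        have : (1:ℕ) ≤ ((j:ℤ) - l).natAbs := by omega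
        have hbk : ((b:ℤ)^k).natAbs = b^k := by
          rw [Int.natAbs_pow, Int.natAbs_natCast]
        calc B < b^k := hBk
          _ ≤ (((j:ℤ) - l).natAbs) * b^k := Nat.le_mul_of_pos_left _ (by omega)
          _ = (-(((j:ℤ) - l)) * (b:ℤ)^k).natAbs := by
              rw [Int.natAbs_mul, Int.natAbs_neg, hbk]
      have hsm := hsmall _ hnbig
      have habs : ‖C j l * int (nn j l)‖ < c := by
        rw [norm_mul, hCnorm, one_mul]
        exact hsm
      have habs2 : |(C j l * int (nn j l)).re| ≤ ‖C j l * int (nn j l)‖ := by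
        exact Complex.abs_re_le_norm _
      simp only [hjl, if_false]
      have h3 := neg_abs_le ((C j l * int (nn j l)).re)
      linarith [habs2, habs, h3]
  -- sum the lower bounds
  have hinner : ∀ j ∈ Finset.range N, ((1:ℝ)+c) - c*N
      ≤ ∑ l ∈ Finset.range N, (C j l * int (nn j l)).re := by
    intro j hj
    have hsum1 : ∑ l ∈ Finset.range N, (if j = l then (1:ℝ) else -c) = (1+c) - c*N := by
      have hsplitf : ∀ l : ℕ, (if j = l then (1:ℝ) else -c)
          = (if j = l then (1+c:ℝ) else 0) + (-c) := by
        intro l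
        by_cases hjl : j = l
        · simp only [hjl, if_true]; ring
        · simp only [hjl, if_false]; ring
      simp_rw [hsplitf]
      rw [Finset.sum_add_distrib, Finset.sum_ite_eq]
      simp only [hj, if_true, Finset.sum_const, Finset.card_range, nsmul_eq_mul]
      ring
    rw [← hsum1]
    exact Finset.sum_le_sum (fun l _ => htermlb j l)
  have hlower : (N:ℝ) * ((1+c) - c*N) ≤ ∫ t, h t ∂μ := by
    rw [hre]
    calc (N:ℝ) * ((1+c) - c*N) = ∑ _j ∈ Finset.range N, ((1+c) - c*N) := by
          rw [Finset.sum_const, Finset.card_range, nsmul_eq_mul]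
      _ ≤ ∑ j ∈ Finset.range N, ∑ l ∈ Finset.range N, (C j l * int (nn j l)).re :=
          Finset.sum_le_sum hinner
  -- numerical contradiction
  have hNr : (N:ℝ) = 2*(b:ℝ)^2 := by rw [hN]; push_cast; ring
  have hbne : (b:ℝ) ≠ 0 := ne_of_gt hbpos
  have hval : (N:ℝ) * ((1+c) - c*(N:ℝ)) = (b:ℝ)^2 + 1/2 := by
    rw [hNr, hc]; field_simp; ring
  linarith [hupper, hlower, hval]
end

section
/- Let b ≥ 2 and E ⊆ [0,1] be such that there exists a nonempty open subinterval I ⊆ (0,1) and an infinite set K ⊆ ℕ with the property that for all x ∈ E and all k ∈ K, the fractional part {b^k x} ∉ I. Then every probability measure μ supported on E satisfies limsup_{|n|→∞} |μ̂(n)| > 0; in particular E is not a set of 'full Fourier decay' and has Fourier dimension 0 if additionally no measure achieves polynomial decay. -/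
open MeasureTheory Filter Real

-- Aux 1: sin lower bound on symmetric interval
lemma aux_sin_lower {r w : ℝ} (hr0 : 0 < r) (hr : r ≤ 1/2) (hw1 : r ≤ w) (hw2 : w ≤ 1 - r) :
    Real.sin (Real.pi * r) ≤ Real.sin (Real.pi * w) := by
  have hpi := Real.pi_pos
  have key : ∀ v : ℝ, r ≤ v → v ≤ 1/2 → Real.sin (π * r) ≤ Real.sin (π * v) := by
    intro v h1 h2
    exact Real.strictMonoOn_sin.monotoneOn
      ⟨by nlinarith, by nlinarith⟩ ⟨by nlinarith, by nlinarith⟩ (by nlinarith)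
  rcases le_or_gt w (1/2) with h | h
  · exact key w hw1 h
  · have : Real.sin (π * w) = Real.sin (π * (1 - w)) := by
      rw [← Real.sin_pi_sub]; ring_nf
    rw [this]
    exact key (1 - w) (by linarith) (by linarith)

-- Aux 2: chord length
lemma aux_chord (s : ℝ) :
    ‖Complex.exp ((2 * Real.pi * s : ℝ) * Complex.I) - 1‖ = 2 * |Real.sin (Real.pi * s)| := by
  rw [Complex.exp_mul_I]
  have h1 : Complex.cos (2 * Real.pi * s : ℝ) = (Real.cos (2 * Real.pi * s) : ℂ) := by
    rw [Complex.ofReal_cos]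
  have h2 : Complex.sin (2 * Real.pi * s : ℝ) = (Real.sin (2 * Real.pi * s) : ℂ) := by
    rw [Complex.ofReal_sin]
  rw [h1, h2]
  have : (Real.cos (2*π*s) : ℂ) + (Real.sin (2*π*s) : ℂ) * Complex.I - 1
      = ((Real.cos (2*π*s) - 1 : ℝ) : ℂ) + ((Real.sin (2*π*s) : ℝ) : ℂ) * Complex.I := by
    push_cast; ring
  rw [this, Complex.norm_add_mul_I]
  have hval : (Real.cos (2*π*s) - 1)^2 + (Real.sin (2*π*s))^2 = (2 * |Real.sin (π*s)|)^2 := by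
    have e1 : Real.cos (2*π*s) = 2 * Real.cos (π*s)^2 - 1 := by
      rw [← Real.cos_two_mul]; ring_nf
    have e2 := Real.sin_sq_add_cos_sq (π*s)
    have e3 := Real.sin_sq_add_cos_sq (2*π*s)
    have e4 : |Real.sin (π*s)|^2 = Real.sin (π*s)^2 := sq_abs _
    nlinarith
  rw [hval, Real.sqrt_sq (by positivity)]

-- Aux 3: integrability
lemma aux_int (μ : Measure ℝ) [IsFiniteMeasure μ] (p q : ℝ) :
    Integrable (fun x : ℝ => Complex.exp ((p * x + q : ℝ) * Complex.I)) μ := by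
  refine Integrable.mono' (integrable_const 1) ?_ ?_
  · refine Continuous.aestronglyMeasurable ?_
    exact Complex.continuous_exp.comp
      ((Complex.continuous_ofReal.comp (by continuity)).mul continuous_const)
  · filter_upwards with x
    rw [Complex.norm_exp_ofReal_mul_I]

set_option maxHeartbeats 2000000 in
theorem stmt19 (b : ℕ) (hb : 2 ≤ b) (E : Set ℝ) (hE : E ⊆ Set.Icc 0 1)
    (a c : ℝ) (ha : 0 ≤ a) (hac : a < c) (hc : c ≤ 1)
    (K : Set ℕ) (hK : K.Infinite)
    (havoid : ∀ x ∈ E, ∀ k ∈ K, Int.fract ((b : ℝ) ^ k * x) ∉ Set.Ioo a c)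
    (μ : Measure ℝ) [IsProbabilityMeasure μ] (hsupp : μ Eᶜ = 0) :
    0 < Filter.limsup
      (fun n : ℤ => ‖∫ t : ℝ, Complex.exp (-2 * Real.pi * Complex.I * n * t) ∂μ‖)
      Filter.cofinite := by
  have hpi := Real.pi_pos
  set r : ℝ := (c - a) / 2 with hr_def
  set m : ℝ := (a + c) / 2 with hm_def
  have hr0 : 0 < r := by rw [hr_def]; linarith
  have hrhalf : r ≤ 1/2 := by rw [hr_def]; linarith
  have hmr1 : r ≤ m := by rw [hr_def, hm_def]; linarith
  have hmr2 : m + r ≤ 1 := by rw [hr_def, hm_def]; linarith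
  set δ₀ : ℝ := Real.sin (Real.pi * r) with hδ₀_def
  have hδ₀ : 0 < δ₀ := Real.sin_pos_of_pos_of_lt_pi (by positivity) (by nlinarith)
  set B : ℝ := 1 / δ₀^2 with hB_def
  have hB0 : 0 < B := by positivity
  set N : ℕ := ⌈B⌉₊ with hN_def
  have hNB : B ≤ N := Nat.le_ceil B
  set δ : ℝ := 1 / (2 * ((N:ℝ)+1)^2) with hδ_def
  have hδ : 0 < δ := by positivity
  set fval : ℤ → ℝ :=
    (fun n : ℤ => ‖∫ t : ℝ, Complex.exp (-2 * Real.pi * Complex.I * n * t) ∂μ‖) with hfval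
  have hae : ∀ᵐ x ∂μ, x ∈ E := by
    rw [MeasureTheory.ae_iff]
    simpa [Set.compl_def] using hsupp
  have hb1 : ∀ n : ℤ, fval n ≤ 1 := by
    intro n
    have hptw : ∀ t : ℝ, ‖Complex.exp (-2 * Real.pi * Complex.I * n * t)‖ ≤ 1 := by
      intro t
      have harg : (-2 * (Real.pi:ℂ) * Complex.I * n * t) = ((-2*Real.pi*n*t : ℝ) : ℂ) * Complex.I := by
        push_cast; ring
      rw [harg, Complex.norm_exp_ofReal_mul_I]
    calc fval n ≤ ∫ _t : ℝ, (1:ℝ) ∂μ :=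
          norm_integral_le_of_norm_le (integrable_const 1) (Filter.Eventually.of_forall hptw)
      _ = 1 := by simp
  -- main claim
  have main : ∀ k ∈ K, ∃ n : ℤ, (b:ℤ)^k ≤ |n| ∧ δ ≤ fval n := by
    intro k hk
    by_contra hcon
    push_neg at hcon
    set β : ℝ := (b:ℝ)^k with hβ
    set s := Finset.range (N+1) with hs
    set F : ℕ → ℕ → ℝ → ℂ := fun j l x =>
      Complex.exp (((2*Real.pi*((j:ℝ)-l)*β) * x + (-(2*Real.pi*((j:ℝ)-l)*m)) : ℝ) * Complex.I)
      with hF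
    set D : ℝ → ℂ := fun x => ∑ j ∈ s,
      Complex.exp (((2*Real.pi*(j:ℝ)*β) * x + (-(2*Real.pi*(j:ℝ)*m)) : ℝ) * Complex.I) with hD
    have hFint : ∀ j l, Integrable (F j l) μ := fun j l => aux_int μ _ _
    have hDD : ∀ x : ℝ, D x * (starRingEnd ℂ) (D x) = ∑ j ∈ s, ∑ l ∈ s, F j l x := by
      intro x
      rw [hD, hF]
      simp only
      rw [map_sum, Finset.sum_mul_sum]
      refine Finset.sum_congr rfl fun j _ => Finset.sum_congr rfl fun l _ => ?_
      rw [← Complex.exp_conj, ← Complex.exp_add]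
      congr 1
      simp only [map_mul, Complex.conj_ofReal, Complex.conj_I]
      push_cast
      ring
    have hDle : ∀ x ∈ E, ‖D x‖ ≤ 1/δ₀ := by
      intro x hx
      set u : ℝ := Int.fract (β * x) with hu
      have hu0 : 0 ≤ u := Int.fract_nonneg _
      have hu1 : u < 1 := Int.fract_lt_one _
      have huI : u ∉ Set.Ioo a c := by
        rw [hu, hβ]; exact havoid x hx k hk
      set z : ℂ := Complex.exp ((2*Real.pi*(u - m) : ℝ) * Complex.I) with hz
      have hbx : β * x = (⌊β*x⌋:ℝ) + u := by
        have := Int.self_sub_floor (β*x)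
        rw [hu]; linarith
      have hbxC : (β:ℂ) * (x:ℂ) = ((⌊β*x⌋:ℤ):ℂ) + (u:ℂ) := by exact_mod_cast congrArg Complex.ofReal hbx
      have hDx : D x = ∑ j ∈ s, z ^ j := by
        rw [hD]
        simp only
        refine Finset.sum_congr rfl fun j _ => ?_
        have harg : (((2*Real.pi*(j:ℝ)*β) * x + (-(2*Real.pi*(j:ℝ)*m)) : ℝ) : ℂ) * Complex.I
            = (((j:ℤ)*⌊β*x⌋ : ℤ) : ℂ) * (2*(Real.pi:ℂ)*Complex.I)
              + (j:ℂ) * (((2*Real.pi*(u - m) : ℝ) : ℂ) * Complex.I) := by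
          push_cast
          linear_combination (2*(Real.pi:ℂ)*Complex.I*(j:ℂ)) * hbxC
        rw [harg, Complex.exp_add, Complex.exp_int_mul_two_pi_mul_I, one_mul, hz,
          Complex.exp_nat_mul]
      have hz1 : ‖z - 1‖ = 2 * |Real.sin (Real.pi * (u - m))| := aux_chord (u - m)
      have hsin : δ₀ ≤ |Real.sin (Real.pi * (u - m))| := by
        rw [Set.mem_Ioo, not_and_or, not_lt, not_lt] at huI
        rcases huI with h | h
        · have h1 : r ≤ m - u := by rw [hr_def, hm_def]; linarith
          have h2 : m - u ≤ 1 - r := by linarith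
          have hmin : Real.sin (Real.pi * (u - m)) = -Real.sin (Real.pi * (m - u)) := by
            rw [← Real.sin_neg]; ring_nf
          rw [hmin, abs_neg, abs_of_nonneg (Real.sin_nonneg_of_nonneg_of_le_pi
            (by nlinarith) (by nlinarith))]
          exact aux_sin_lower hr0 hrhalf h1 h2
        · have h1 : r ≤ u - m := by rw [hr_def, hm_def]; linarith
          have h2 : u - m ≤ 1 - r := by linarith
          rw [abs_of_nonneg (Real.sin_nonneg_of_nonneg_of_le_pi (by nlinarith) (by nlinarith))]
          exact aux_sin_lower hr0 hrhalf h1 h2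
      have hzd : 2*δ₀ ≤ ‖z - 1‖ := by rw [hz1]; linarith
      have hzne : z ≠ 1 := by
        intro h
        rw [h] at hzd
        simp only [sub_self, norm_zero] at hzd
        linarith
      have hznorm : ‖z‖ = 1 := by rw [hz, Complex.norm_exp_ofReal_mul_I]
      rw [hDx, geom_sum_eq hzne, norm_div]
      have h1 : ‖z^(N+1) - 1‖ ≤ 2 := by
        calc ‖z^(N+1) - 1‖ ≤ ‖z^(N+1)‖ + ‖(1:ℂ)‖ := norm_sub_le _ _
          _ = 2 := by rw [norm_pow, hznorm]; norm_num
      calc ‖z^(N+1) - 1‖ / ‖z - 1‖ ≤ 2 / (2*δ₀) :=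
            div_le_div₀ (by norm_num) h1 (by positivity) hzd
        _ = 1/δ₀ := by field_simp
    set G : ℂ := ∫ x, D x * (starRingEnd ℂ) (D x) ∂μ with hG
    have hGle : ‖G‖ ≤ B := by
      have step : ‖G‖ ≤ ∫ _x, B ∂μ := by
        refine norm_integral_le_of_norm_le (integrable_const B) ?_
        filter_upwards [hae] with x hx
        have hd := hDle x hx
        rw [norm_mul, RCLike.norm_conj]
        have hnn : 0 ≤ ‖D x‖ := norm_nonneg _
        rw [hB_def]
        rw [div_eq_mul_inv, one_mul, ← inv_pow]
        calc ‖D x‖ * ‖D x‖ ≤ (1/δ₀) * (1/δ₀) := mul_le_mul hd hd hnn (by positivity)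
          _ = (δ₀⁻¹)^2 := by rw [one_div]; ring
      simpa using step
    have hGeq : G = ∑ j ∈ s, ∑ l ∈ s, ∫ x, F j l x ∂μ := by
      rw [hG, show (fun x => D x * (starRingEnd ℂ) (D x))
          = fun x => ∑ j ∈ s, ∑ l ∈ s, F j l x from funext hDD]
      rw [integral_finset_sum s (fun j _ => integrable_finset_sum s (fun l _ => hFint j l))]
      exact Finset.sum_congr rfl fun j _ => integral_finset_sum s fun l _ => hFint j l
    have hdiag : ∀ j : ℕ, ∫ x, F j j x ∂μ = 1 := by
      intro j
      have hFjj : F j j = fun _ => 1 := by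
        funext x
        rw [hF]
        simp
      rw [hFjj]
      simp
    have hnorm_off : ∀ j l : ℕ, ‖∫ x, F j l x ∂μ‖ = fval (((l:ℤ) - j) * (b:ℤ)^k) := by
      intro j l
      have hsplit : ∀ x : ℝ, F j l x
          = Complex.exp (((-(2*Real.pi*((j:ℝ)-l)*m)) : ℝ) * Complex.I)
            * Complex.exp (-2 * Real.pi * Complex.I * ((((l:ℤ) - j) * (b:ℤ)^k : ℤ) : ℂ) * (x:ℂ)) := by
        intro x
        rw [hF]
        simp only
        rw [← Complex.exp_add]
        congr 1
        rw [hβ]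
        push_cast
        ring
      rw [show (fun x => F j l x) = _ from funext hsplit, integral_const_mul, norm_mul,
        Complex.norm_exp_ofReal_mul_I, one_mul, hfval]
    have hGsum : G = ((N+1 : ℕ) : ℂ) + ∑ j ∈ s, ∑ l ∈ s.erase j, ∫ x, F j l x ∂μ := by
      rw [hGeq]
      have hline : ∀ j ∈ s, ∑ l ∈ s, ∫ x, F j l x ∂μ
          = (∑ l ∈ s.erase j, ∫ x, F j l x ∂μ) + 1 := by
        intro j hj
        rw [← Finset.sum_erase_add s _ hj, hdiag j]
      rw [Finset.sum_congr rfl hline, Finset.sum_add_distrib]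
      simp [hs, Finset.card_range, add_comm]
    have hoffb : ‖∑ j ∈ s, ∑ l ∈ s.erase j, ∫ x, F j l x ∂μ‖ ≤ ((N:ℝ)+1)^2 * δ := by
      have hb0 : (0:ℤ) < (b:ℤ) := by positivity
      calc ‖∑ j ∈ s, ∑ l ∈ s.erase j, ∫ x, F j l x ∂μ‖
          ≤ ∑ j ∈ s, ‖∑ l ∈ s.erase j, ∫ x, F j l x ∂μ‖ := norm_sum_le _ _
        _ ≤ ∑ j ∈ s, ∑ l ∈ s.erase j, ‖∫ x, F j l x ∂μ‖ :=
            Finset.sum_le_sum fun j _ => norm_sum_le _ _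
        _ ≤ ∑ j ∈ s, ∑ l ∈ s.erase j, δ := by
            refine Finset.sum_le_sum fun j _ => Finset.sum_le_sum fun l hl => ?_
            rw [hnorm_off j l]
            refine le_of_lt (hcon _ ?_)
            have hne : (l:ℤ) - j ≠ 0 := by
              have hlj := Finset.ne_of_mem_erase hl
              intro hcontra
              exact hlj (by omega)
            rw [abs_mul, abs_pow, abs_of_nonneg hb0.le]
            have h1 : (1:ℤ) ≤ |(l:ℤ) - j| := Int.one_le_abs hne
            nlinarith [pow_pos hb0 k]
        _ ≤ ((N:ℝ)+1)^2 * δ := by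
            have hcard : ∀ j ∈ s, ∑ _l ∈ s.erase j, δ = (N:ℝ) * δ := by
              intro j hj
              rw [Finset.sum_const, Finset.card_erase_of_mem hj, hs, Finset.card_range]
              simp [nsmul_eq_mul]
            rw [Finset.sum_congr rfl hcard, Finset.sum_const, hs, Finset.card_range,
              nsmul_eq_mul]
            push_cast
            nlinarith
    have hlow : ((N:ℝ)+1) - ((N:ℝ)+1)^2 * δ ≤ ‖G‖ := by
      have htri := norm_sub_norm_le (((N+1:ℕ):ℂ))
        (-(∑ j ∈ s, ∑ l ∈ s.erase j, ∫ x, F j l x ∂μ))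
      rw [sub_neg_eq_add, ← hGsum, norm_neg] at htri
      have hnc : ‖((N+1:ℕ):ℂ)‖ = (N:ℝ)+1 := by
        rw [Complex.norm_natCast]
        push_cast
        ring
      rw [hnc] at htri
      linarith
    have hhalf : ((N:ℝ)+1)^2 * δ = 1/2 := by
      rw [hδ_def]
      field_simp
    rw [hhalf] at hlow
    linarith
  -- from main claim to frequently
  have hfreq : ∃ᶠ n in Filter.cofinite, δ ≤ fval n := by
    rw [Filter.frequently_cofinite_iff_infinite]
    by_contra hfin
    rw [Set.not_infinite] at hfin
    obtain ⟨M, hM⟩ : ∃ M : ℕ, ∀ n ∈ {n : ℤ | δ ≤ fval n}, n.natAbs ≤ M := by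
      obtain ⟨M, hM⟩ := (hfin.image Int.natAbs).bddAbove
      exact ⟨M, fun n hn => hM (Set.mem_image_of_mem _ hn)⟩
    obtain ⟨k, hkK, hkM⟩ := hK.exists_gt M
    obtain ⟨n, hn1, hn2⟩ := main k hkK
    have hlt : (M:ℤ) < |n| := by
      calc (M:ℤ) < k := by exact_mod_cast hkM
        _ < 2^k := by exact_mod_cast Nat.lt_two_pow_self (n := k)
        _ ≤ (b:ℤ)^k := pow_le_pow_left₀ (by norm_num) (by exact_mod_cast hb) k
        _ ≤ |n| := hn1
    have := hM n hn2
    rw [Int.abs_eq_natAbs] at hlt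
    omega
  exact lt_of_lt_of_le hδ (Filter.le_limsup_of_frequently_le hfreq
    (Filter.isBoundedUnder_of ⟨1, hb1⟩))
end
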